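/- arXiv:2407.04576 — 6 statements merged into one kernel-verified Lean document; each statement's English description precedes it below -/
import Mathlib

section
/- Let ℓ ≥ 1, γ > 0, α_0,…,α_ℓ ≥ 0 be real constants. Define F_s(t) for integers 1 ≤ t ≤ s by: F_s(t) = γ for s ≤ ℓ; and for s > ℓ, F_s(t) = F_{s−ℓ}(t) if 1 ≤ t ≤ s−ℓ−1, F_s(t) = α_0·F_{s−ℓ}(s−ℓ) if t = s−ℓ, and F_s(t) = α_{t−s+ℓ}·F_{s−ℓ}(s−ℓ) + γ if t ≥ s−ℓ+1. Then for all k ≥ 1 and 1 ≤ t ≤ k, F_k(t) ≤ γ·(max_{0≤j≤ℓ} α_j · Σ_{i=0}^{⌊k/ℓ⌋} α_ℓ^i + max{1, α_0}). -/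
/-- Uniform upper bound for the recursively defined constants `F` arising in the
inductive variance-tensorization argument: with `F s t = γ` for `s ≤ ℓ` and, for `s > ℓ`,
`F s t = F (s−ℓ) t` for `t ≤ s−ℓ−1`, `F s (s−ℓ) = α 0 · F (s−ℓ) (s−ℓ)`, and
`F s t = α (t−s+ℓ) · F (s−ℓ) (s−ℓ) + γ` for `t ≥ s−ℓ+1`, one has for all `1 ≤ t ≤ k`:
`F k t ≤ γ · (max_{0 ≤ j ≤ ℓ} α j · ∑_{i=0}^{⌊k/ℓ⌋} (α ℓ)^i + max 1 (α 0))`. -/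
theorem statement3 (ℓ : ℕ) (hl : 1 ≤ ℓ) (γ : ℝ) (hγ : 0 < γ)
    (α : ℕ → ℝ) (hα : ∀ j ≤ ℓ, 0 ≤ α j)
    (F : ℕ → ℕ → ℝ)
    (hbase : ∀ s t, 1 ≤ t → t ≤ s → s ≤ ℓ → F s t = γ)
    (hrec1 : ∀ s t, ℓ < s → 1 ≤ t → t + ℓ + 1 ≤ s → F s t = F (s - ℓ) t)
    (hrec2 : ∀ s, ℓ < s → F s (s - ℓ) = α 0 * F (s - ℓ) (s - ℓ))
    (hrec3 : ∀ s t, ℓ < s → s - ℓ + 1 ≤ t → t ≤ s →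
      F s t = α (t - (s - ℓ)) * F (s - ℓ) (s - ℓ) + γ)
    (k t : ℕ) (hk : 1 ≤ k) (ht1 : 1 ≤ t) (ht2 : t ≤ k) :
    F k t ≤ γ * (((Finset.range (ℓ + 1)).sup' (Finset.nonempty_range_iff.mpr (by omega)) α)
        * (∑ i ∈ Finset.range (k / ℓ + 1), α ℓ ^ i) + max 1 (α 0)) := by
  have hαℓ : 0 ≤ α ℓ := hα ℓ le_rfl
  set M := (Finset.range (ℓ + 1)).sup' (Finset.nonempty_range_iff.mpr (by omega)) α with hMdef
  have hMj : ∀ j ≤ ℓ, α j ≤ M := fun j hj =>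
    Finset.le_sup' α (Finset.mem_range.mpr (by omega))
  have hM0 : 0 ≤ M := (hα 0 (by omega)).trans (hMj 0 (by omega))
  have hsumpos : ∀ n, 0 ≤ ∑ i ∈ Finset.range n, α ℓ ^ i := fun n =>
    Finset.sum_nonneg fun i _ => pow_nonneg hαℓ i
  have hsum1 : ∀ n, (1:ℝ) ≤ ∑ i ∈ Finset.range (n + 1), α ℓ ^ i := by
    intro n
    calc (1:ℝ) = ∑ i ∈ Finset.range 1, α ℓ ^ i := by simp
    _ ≤ _ := Finset.sum_le_sum_of_subset_of_nonneg
        (Finset.range_subset_range.mpr (by omega)) (fun i _ _ => pow_nonneg hαℓ i)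
  have hsummono : ∀ a b, a ≤ b →
      (∑ i ∈ Finset.range (a / ℓ + 1), α ℓ ^ i) ≤ ∑ i ∈ Finset.range (b / ℓ + 1), α ℓ ^ i := by
    intro a b hab
    exact Finset.sum_le_sum_of_subset_of_nonneg
      (Finset.range_subset_range.mpr (by have := Nat.div_le_div_right (c := ℓ) hab; omega))
      (fun i _ _ => pow_nonneg hαℓ i)
  -- diagonal bound
  have hdiag : ∀ s, 1 ≤ s → F s s ≤ γ * ∑ i ∈ Finset.range (s / ℓ + 1), α ℓ ^ i := by
    intro s
    induction s using Nat.strong_induction_on with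
    | _ s ih =>
      intro hs
      by_cases h : s ≤ ℓ
      · rw [hbase s s hs le_rfl h]
        nlinarith [hsum1 (s / ℓ)]
      · push_neg at h
        have hts : s - (s - ℓ) = ℓ := by omega
        have heq := hrec3 s s h (by omega) le_rfl
        rw [hts] at heq
        rw [heq]
        have ihv := ih (s - ℓ) (by omega) (by omega)
        have hdiv : s / ℓ = (s - ℓ) / ℓ + 1 := by
          conv_lhs => rw [show s = (s - ℓ) + ℓ by omega]
          exact Nat.add_div_right _ (by omega)
        rw [hdiv, geom_sum_succ]
        nlinarith [hsumpos ((s - ℓ) / ℓ + 1),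
          mul_le_mul_of_nonneg_left ihv hαℓ]
  have main : ∀ k, 1 ≤ k → ∀ t, 1 ≤ t → t ≤ k →
      F k t ≤ γ * (M * (∑ i ∈ Finset.range (k / ℓ + 1), α ℓ ^ i) + max 1 (α 0)) := by
    intro k
    induction k using Nat.strong_induction_on with
    | _ k ih =>
    intro hk t ht1 ht2
    by_cases h : k ≤ ℓ
    · rw [hbase k t ht1 ht2 h]
      have h1 : (1:ℝ) ≤ max 1 (α 0) := le_max_left _ _
      nlinarith [mul_nonneg hM0 (hsumpos (k / ℓ + 1))]
    · push_neg at h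
      have hmax1 : (1:ℝ) ≤ max 1 (α 0) := le_max_left _ _
      have hSk := hsumpos (k / ℓ + 1)
      rcases lt_trichotomy (t + ℓ) k with hc | hc | hc
      · -- t + ℓ + 1 ≤ k
        rw [hrec1 k t h ht1 (by omega)]
        have := ih (k - ℓ) (by omega) (by omega) t ht1 (by omega)
        have hmono := hsummono (k - ℓ) k (by omega)
        nlinarith [mul_le_mul_of_nonneg_left hmono (mul_nonneg hγ.le hM0)]
      · -- t = k - ℓ
        have ht : t = k - ℓ := by omega
        rw [ht, hrec2 k h]
        have hd := hdiag (k - ℓ) (by omega)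
        have hmono := hsummono (k - ℓ) k (by omega)
        have hα0M : α 0 ≤ M := hMj 0 (by omega)
        have hα00 : 0 ≤ α 0 := hα 0 (by omega)
        have hS' := hsumpos ((k - ℓ) / ℓ + 1)
        nlinarith [mul_le_mul_of_nonneg_left hd hα00,
          mul_le_mul_of_nonneg_right hα0M (mul_nonneg hγ.le hS'),
          mul_le_mul_of_nonneg_left hmono (mul_nonneg hM0 hγ.le)]
      · -- t ≥ k - ℓ + 1
        rw [hrec3 k t h (by omega) ht2]
        have hd := hdiag (k - ℓ) (by omega)
        have hjle : t - (k - ℓ) ≤ ℓ := by omega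
        have hαjM : α (t - (k - ℓ)) ≤ M := hMj _ hjle
        have hαj0 : 0 ≤ α (t - (k - ℓ)) := hα _ hjle
        have hmono := hsummono (k - ℓ) k (by omega)
        have hS' := hsumpos ((k - ℓ) / ℓ + 1)
        nlinarith [mul_le_mul_of_nonneg_left hd hαj0,
          mul_le_mul_of_nonneg_right hαjM (mul_nonneg hγ.le hS'),
          mul_le_mul_of_nonneg_left hmono (mul_nonneg hM0 hγ.le)]
  exact main k hk t ht1 ht2
end

section
/- Let ℓ ≥ 1, γ > 0, α_0,…,α_ℓ ≥ 0, and let F be as in the recursion: F_s(t) = γ for s ≤ ℓ, and for s > ℓ, F_s(t) = F_{s−ℓ}(t) for t ≤ s−ℓ−1, F_s(s−ℓ) = α_0 F_{s−ℓ}(s−ℓ), and F_s(t) = α_{t−s+ℓ} F_{s−ℓ}(s−ℓ) + γ for t ≥ s−ℓ+1. Let S_k = {a ∈ ℤ : a ≡ k (mod ℓ)}. Then, with the convention max(∅) = 0, F_k(t) ≤ γ·((Σ_{i=0}^{|[t−1]∩S_k|} α_ℓ^i)·α_{t − max([t−1]∩S_k)} + 1)·α_0^{𝟙[t ∈ S_k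 and t ≠ k]} for all 1 ≤ t ≤ k. -/
private lemma aux_mod (ℓ a k : ℕ) (hl : 1 ≤ ℓ) (hk : ℓ ≤ k) (h : a % ℓ = k % ℓ)
    (h1 : k - ℓ ≤ a) (h2 : a ≤ k) : a = k - ℓ ∨ a = k := by
  have hd : ℓ ∣ (k - a) := (Nat.modEq_iff_dvd' h2).mp h
  rcases Nat.eq_zero_or_pos (k - a) with h0 | hpos
  · right; omega
  · have := Nat.le_of_dvd hpos hd
    left; omega

private lemma aux_res (ℓ k : ℕ) (hk : ℓ ≤ k) : (k - ℓ) % ℓ = k % ℓ := by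
  conv_rhs => rw [show k = (k - ℓ) + ℓ by omega]
  rw [Nat.add_mod_right]

private lemma aux_filter (ℓ k m : ℕ) (hl : 1 ≤ ℓ) (hk : ℓ < k) (h1 : k - ℓ ≤ m)
    (h2 : m ≤ k - 1) :
    (Finset.Icc 1 m).filter (fun a => a % ℓ = k % ℓ)
      = insert (k - ℓ) ((Finset.Icc 1 (k - ℓ - 1)).filter (fun a => a % ℓ = k % ℓ)) := by
  ext a
  simp only [Finset.mem_filter, Finset.mem_Icc, Finset.mem_insert]
  constructor
  · rintro ⟨⟨ha1, ha2⟩, ha3⟩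
    by_cases hc : a ≤ k - ℓ - 1
    · exact Or.inr ⟨⟨ha1, hc⟩, ha3⟩
    · left
      rcases aux_mod ℓ a k hl hk.le ha3 (by omega) (by omega) with h | h
      · exact h
      · omega
  · rintro (rfl | ⟨⟨ha1, ha2⟩, ha3⟩)
    · exact ⟨⟨by omega, by omega⟩, aux_res ℓ k hk.le⟩
    · exact ⟨⟨ha1, by omega⟩, ha3⟩

private lemma aux_sup_le (ℓ r N : ℕ) :
    ((Finset.Icc 1 N).filter (fun a => a % ℓ = r)).sup id ≤ N := by
  apply Finset.sup_le
  intro a ha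
  exact (Finset.mem_Icc.mp (Finset.mem_filter.mp ha).1).2

private lemma aux_empty (ℓ k : ℕ) (hl : 1 ≤ ℓ) (hk : ℓ < k) (hk2 : k ≤ 2 * ℓ) :
    (Finset.Icc 1 (k - ℓ - 1)).filter (fun a => a % ℓ = k % ℓ) = ∅ := by
  rw [Finset.eq_empty_iff_forall_notMem]
  intro a ha
  simp only [Finset.mem_filter, Finset.mem_Icc] at ha
  obtain ⟨⟨ha1, ha2⟩, ha3⟩ := ha
  have hd : ℓ ∣ (k - a) := (Nat.modEq_iff_dvd' (by omega)).mp ha3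
  obtain ⟨q, hq⟩ := hd
  have h2 : ℓ * 2 ≤ ℓ * q := by
    rcases Nat.lt_or_ge q 2 with h | h
    · interval_cases q <;> omega
    · exact Nat.mul_le_mul_left _ h
  omega

private lemma aux_one_le (x : ℝ) (hx : 0 ≤ x) (n : ℕ) :
    (1:ℝ) ≤ ∑ i ∈ Finset.range (n + 1), x ^ i := by
  have := Finset.single_le_sum (f := fun i => x ^ i)
    (fun i _ => pow_nonneg hx i) (Finset.mem_range.mpr (Nat.succ_pos n))
  simpa using this

/-- Diagonal bound: `F k k ≤ γ * ∑_{i=0}^{m_k} (α ℓ)^i`. -/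
private lemma aux_diag (ℓ : ℕ) (hl : 1 ≤ ℓ) (γ : ℝ) (hγ : 0 < γ)
    (α : ℕ → ℝ) (hα : ∀ j ≤ ℓ, 0 ≤ α j)
    (F : ℕ → ℕ → ℝ)
    (hbase : ∀ s t, 1 ≤ t → t ≤ s → s ≤ ℓ → F s t = γ)
    (hrec3 : ∀ s t, ℓ < s → s - ℓ + 1 ≤ t → t ≤ s →
      F s t = α (t - (s - ℓ)) * F (s - ℓ) (s - ℓ) + γ) :
    ∀ k, 1 ≤ k → F k k ≤ γ * ∑ i ∈ Finset.range
      (((Finset.Icc 1 (k - 1)).filter fun a => a % ℓ = k % ℓ).card + 1), α ℓ ^ i := by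
  intro k
  induction k using Nat.strong_induction_on with
  | _ k ih =>
  intro hk
  have hαℓ : (0:ℝ) ≤ α ℓ := hα ℓ le_rfl
  by_cases hkl : k ≤ ℓ
  · rw [hbase k k hk le_rfl hkl]
    have h1 := aux_one_le (α ℓ) hαℓ (((Finset.Icc 1 (k - 1)).filter fun a => a % ℓ = k % ℓ).card)
    nlinarith
  · push_neg at hkl
    have hres := aux_res ℓ k hkl.le
    have hF : F k k = α ℓ * F (k - ℓ) (k - ℓ) + γ := by
      have := hrec3 k k hkl (by omega) le_rfl
      rwa [show k - (k - ℓ) = ℓ by omega] at this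
    have hins := aux_filter ℓ k (k - 1) hl hkl (by omega) le_rfl
    have hnot : k - ℓ ∉ (Finset.Icc 1 (k - ℓ - 1)).filter (fun a => a % ℓ = k % ℓ) := by
      simp only [Finset.mem_filter, Finset.mem_Icc]
      omega
    have hcard : ((Finset.Icc 1 (k - 1)).filter fun a => a % ℓ = k % ℓ).card
        = ((Finset.Icc 1 (k - ℓ - 1)).filter fun a => a % ℓ = k % ℓ).card + 1 := by
      rw [hins, Finset.card_insert_of_notMem hnot]
    have ihh := ih (k - ℓ) (by omega) (by omega)
    rw [hres] at ihh
    rw [hF, hcard]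
    rw [geom_sum_succ]
    nlinarith [mul_le_mul_of_nonneg_left ihh hαℓ]

/-- Explicit closed-form upper bound `F̂_k(t)` for the recursively defined constants `F`:
with `S_k` the residue class of `k` modulo `ℓ`, writing the intersection of `{1,…,t−1}`
with `S_k` as a filtered `Finset` (its cardinality giving the number of summands and its
maximum, with convention `max ∅ = 0`, giving the index shift), one has
`F k t ≤ γ·((∑_{i=0}^{|[t−1]∩S_k|} (α ℓ)^i)·α (t − max([t−1]∩S_k)) + 1)
          ·(α 0)^{𝟙[t ∈ S_k ∧ t ≠ k]}`. -/
theorem statement4 (ℓ : ℕ) (hl : 1 ≤ ℓ) (γ : ℝ) (hγ : 0 < γ)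
    (α : ℕ → ℝ) (hα : ∀ j ≤ ℓ, 0 ≤ α j)
    (F : ℕ → ℕ → ℝ)
    (hbase : ∀ s t, 1 ≤ t → t ≤ s → s ≤ ℓ → F s t = γ)
    (hrec1 : ∀ s t, ℓ < s → 1 ≤ t → t + ℓ + 1 ≤ s → F s t = F (s - ℓ) t)
    (hrec2 : ∀ s, ℓ < s → F s (s - ℓ) = α 0 * F (s - ℓ) (s - ℓ))
    (hrec3 : ∀ s t, ℓ < s → s - ℓ + 1 ≤ t → t ≤ s →
      F s t = α (t - (s - ℓ)) * F (s - ℓ) (s - ℓ) + γ)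
    (k t : ℕ) (hk : 1 ≤ k) (ht1 : 1 ≤ t) (ht2 : t ≤ k) :
    F k t ≤ γ * ((∑ i ∈ Finset.range
          (((Finset.Icc 1 (t - 1)).filter fun a => a % ℓ = k % ℓ).card + 1), α ℓ ^ i)
        * α (t - ((Finset.Icc 1 (t - 1)).filter fun a => a % ℓ = k % ℓ).sup id) + 1)
      * α 0 ^ (if t % ℓ = k % ℓ ∧ t ≠ k then 1 else 0) := by
  have hαℓ : (0:ℝ) ≤ α ℓ := hα ℓ le_rfl
  have hα0 : (0:ℝ) ≤ α 0 := hα 0 (by omega)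
  induction k using Nat.strong_induction_on generalizing t with
  | _ k ih =>
  have hSnn : ∀ n, (0:ℝ) ≤ ∑ i ∈ Finset.range n, α ℓ ^ i :=
    fun n => Finset.sum_nonneg (fun i _ => pow_nonneg hαℓ i)
  have hSone : ∀ n, (1:ℝ) ≤ ∑ i ∈ Finset.range (n + 1), α ℓ ^ i := aux_one_le (α ℓ) hαℓ
  by_cases hkl : k ≤ ℓ
  · -- base case
    rw [hbase k t ht1 ht2 hkl]
    have hind : ¬(t % ℓ = k % ℓ ∧ t ≠ k) := by
      rintro ⟨h1, h2⟩
      have htk : t < k := lt_of_le_of_ne ht2 h2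
      have h3 : t % ℓ = t := Nat.mod_eq_of_lt (by omega)
      rcases Nat.lt_or_ge k ℓ with h4 | h4
      · rw [Nat.mod_eq_of_lt h4] at h1; omega
      · have : k = ℓ := le_antisymm hkl h4
        rw [this, Nat.mod_self] at h1; omega
    rw [if_neg hind, pow_zero, mul_one]
    have hidx : 0 ≤ α (t - ((Finset.Icc 1 (t - 1)).filter fun a => a % ℓ = k % ℓ).sup id) :=
      hα _ (by omega)
    nlinarith [hSnn (((Finset.Icc 1 (t - 1)).filter fun a => a % ℓ = k % ℓ).card + 1),
      mul_nonneg (hSnn (((Finset.Icc 1 (t - 1)).filter fun a => a % ℓ = k % ℓ).card + 1)) hidx]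
  · push_neg at hkl
    have hres := aux_res ℓ k hkl.le
    have hdiag := aux_diag ℓ hl γ hγ α hα F hbase hrec3 (k - ℓ) (by omega)
    rw [hres] at hdiag
    rcases Nat.lt_or_ge t (k - ℓ) with hc1 | hc
    · -- case t ≤ k - ℓ - 1 : recurse
      rw [hrec1 k t hkl ht1 (by omega)]
      have := ih (k - ℓ) (by omega) t (by omega) ht1 (by omega)
      rw [hres] at this
      have hif : (if t % ℓ = k % ℓ ∧ t ≠ k - ℓ then 1 else 0)
          = (if t % ℓ = k % ℓ ∧ t ≠ k then 1 else 0) := by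
        have h1 : t ≠ k - ℓ := by omega
        have h2 : t ≠ k := by omega
        simp [h1, h2]
      rwa [hif] at this
    rcases eq_or_lt_of_le hc with hc2 | hc3
    · -- case t = k - ℓ
      subst hc2
      rw [hrec2 k hkl, if_pos ⟨hres, by omega⟩, pow_one]
      set T := (Finset.Icc 1 (k - ℓ - 1)).filter (fun a => a % ℓ = k % ℓ) with hT
      have hkey : ∑ i ∈ Finset.range (T.card + 1), α ℓ ^ i
          ≤ (∑ i ∈ Finset.range (T.card + 1), α ℓ ^ i) * α (k - ℓ - T.sup id) + 1 := by
        rcases le_or_gt k (2 * ℓ) with h2 | h2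
        · have hE : T = ∅ := aux_empty ℓ k hl hkl h2
          rw [hE]
          simp only [Finset.card_empty, Finset.sup_empty, zero_add]
          have : (0:ℝ) ≤ α (k - ℓ - ⊥) := hα _ (by simp; omega)
          simp only [Finset.range_one, Finset.sum_singleton, pow_zero, one_mul]
          linarith
        · have hins2 := aux_filter ℓ (k - ℓ) (k - ℓ - 1) hl (by omega) (by omega) le_rfl
          rw [hres] at hins2
          have hsup : T.sup id = k - ℓ - ℓ := by
            rw [hT, hins2, Finset.sup_insert]
            have h3 : ((Finset.Icc 1 (k - ℓ - ℓ - 1)).filter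
                (fun a => a % ℓ = k % ℓ)).sup id ≤ k - ℓ - ℓ :=
              le_trans (aux_sup_le ℓ (k % ℓ) (k - ℓ - ℓ - 1)) (by omega)
            simpa using sup_eq_left.mpr h3
          rw [hsup, show k - ℓ - (k - ℓ - ℓ) = ℓ by omega]
          have hgs : (∑ i ∈ Finset.range (T.card + 1), α ℓ ^ i) * α ℓ + 1
              = ∑ i ∈ Finset.range (T.card + 1 + 1), α ℓ ^ i := by
            conv_rhs => rw [geom_sum_succ]
            ring
          rw [hgs]
          conv_rhs => rw [Finset.sum_range_succ]
          have := pow_nonneg hαℓ (T.card + 1)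
          linarith
      have h1 : F (k - ℓ) (k - ℓ) ≤ γ * ((∑ i ∈ Finset.range (T.card + 1), α ℓ ^ i)
          * α (k - ℓ - T.sup id) + 1) := by nlinarith
      calc α 0 * F (k - ℓ) (k - ℓ)
          ≤ α 0 * (γ * ((∑ i ∈ Finset.range (T.card + 1), α ℓ ^ i)
            * α (k - ℓ - T.sup id) + 1)) := mul_le_mul_of_nonneg_left h1 hα0
        _ = γ * ((∑ i ∈ Finset.range (T.card + 1), α ℓ ^ i)
            * α (k - ℓ - T.sup id) + 1) * α 0 := by ring
    · -- case k - ℓ < t ≤ k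
      rw [hrec3 k t hkl (by omega) ht2]
      have hins := aux_filter ℓ k (t - 1) hl hkl (by omega) (by omega)
      have hnot : k - ℓ ∉ (Finset.Icc 1 (k - ℓ - 1)).filter (fun a => a % ℓ = k % ℓ) := by
        simp only [Finset.mem_filter, Finset.mem_Icc]
        omega
      have hcard : ((Finset.Icc 1 (t - 1)).filter fun a => a % ℓ = k % ℓ).card
          = ((Finset.Icc 1 (k - ℓ - 1)).filter fun a => a % ℓ = k % ℓ).card + 1 := by
        rw [hins, Finset.card_insert_of_notMem hnot]
      have hsup : ((Finset.Icc 1 (t - 1)).filter fun a => a % ℓ = k % ℓ).sup id = k - ℓ := by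
        rw [hins, Finset.sup_insert]
        have h3 : ((Finset.Icc 1 (k - ℓ - 1)).filter
            (fun a => a % ℓ = k % ℓ)).sup id ≤ k - ℓ :=
          le_trans (aux_sup_le ℓ (k % ℓ) (k - ℓ - 1)) (by omega)
        simpa using sup_eq_left.mpr h3
      have hind : ¬(t % ℓ = k % ℓ ∧ t ≠ k) := by
        rintro ⟨h1, h2⟩
        rcases aux_mod ℓ t k hl hkl.le h1 (by omega) ht2 with h | h <;> omega
      rw [hcard, hsup, if_neg hind, pow_zero, mul_one, Finset.sum_range_succ]
      have hd : (0:ℝ) ≤ α (t - (k - ℓ)) := hα _ (by omega)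
      have hp := pow_nonneg hαℓ
        (((Finset.Icc 1 (k - ℓ - 1)).filter fun a => a % ℓ = k % ℓ).card + 1)
      have hSnn' := hSnn
        (((Finset.Icc 1 (k - ℓ - 1)).filter fun a => a % ℓ = k % ℓ).card + 1)
      nlinarith [mul_le_mul_of_nonneg_left hdiag hd,
        mul_nonneg (mul_nonneg hγ.le hp) hd]
end

section
/- Let q = Δ+1 and let Ψ ∈ ℝ^{(qΔ)×(qΔ)} be the matrix indexed by pairs (u,a) with u ∈ [Δ], a ∈ [q], given by Ψ((u,a),(v,b)) = −1/(Δ+1) + 𝟙[u ≠ v ∧ a ≠ b]·(1/Δ) + 𝟙[u = v ∧ a = b]. Then the maximum eigenvalue of Ψ satisfies λ_max(Ψ) ≤ 1 + 1/Δ. -/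
/-!
Writing `J` for the all-ones matrix, the matrix `(1 + 1/Δ) I - Ψ` splits as
`Δ⁻¹ (I ⊗ J) + Δ⁻¹ (J ⊗ (I - J/(Δ+1)))`. Both Kronecker factors of each summand are positive
semidefinite: `J` is a Gram matrix, and `I - J/n` on an `n`-element index set is positive
semidefinite by Cauchy–Schwarz, `(∑ xᵢ)² ≤ n ∑ xᵢ²`.
-/

open Matrix
open scoped Kronecker

theorem Matrix.posSemidef_of_one {κ : Type*} [Fintype κ] :
    (of fun _ _ : κ => (1 : ℝ)).PosSemidef := by
  simpa [vecMulVec] using posSemidef_vecMulVec_self_star (1 : κ → ℝ)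

theorem Matrix.posSemidef_one_sub_smul_of_one {κ : Type*} [Fintype κ] [DecidableEq κ] {c : ℝ}
    (hc : c * Fintype.card κ ≤ 1) : (1 - c • of fun _ _ : κ => (1 : ℝ)).PosSemidef := by
  refine .of_dotProduct_mulVec_nonneg ?_ fun x => ?_
  · ext i j
    simp [one_apply, eq_comm]
  have hJ : (of fun _ _ : κ => (1 : ℝ)) *ᵥ x = fun _ => ∑ i, x i := by
    ext
    simp [mulVec, dotProduct]
  have hquad : star x ⬝ᵥ ((1 - c • of fun _ _ : κ => (1 : ℝ)) *ᵥ x)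
      = ∑ i, x i ^ 2 - c * (∑ i, x i) ^ 2 := by
    simp only [sub_mulVec, one_mulVec, smul_mulVec, hJ, dotProduct_sub, dotProduct_smul,
      star_trivial]
    simp [dotProduct, sq, Finset.sum_mul]
  have hcs : (∑ i, x i) ^ 2 ≤ Fintype.card κ * ∑ i, x i ^ 2 := by
    simpa using sq_sum_le_card_mul_sum_sq (s := Finset.univ) (f := x)
  have hsq : 0 ≤ ∑ i, x i ^ 2 := Finset.sum_nonneg fun i _ => sq_nonneg (x i)
  rw [hquad]
  rcases le_total c 0 with hc₀ | hc₀
  · nlinarith [mul_nonpos_of_nonpos_of_nonneg hc₀ (sq_nonneg (∑ i, x i))]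
  · nlinarith [mul_le_mul_of_nonneg_left hcs hc₀, mul_nonneg (sub_nonneg.2 hc) hsq]

theorem statement7_general (Δ : ℕ) :
    Matrix.PosSemidef
      ((1 + 1 / (Δ : ℝ)) • (1 : Matrix (Fin Δ × Fin (Δ + 1)) (Fin Δ × Fin (Δ + 1)) ℝ)
        - Matrix.of (fun p p' : Fin Δ × Fin (Δ + 1) =>
            -1 / ((Δ : ℝ) + 1) + (if p.1 ≠ p'.1 ∧ p.2 ≠ p'.2 then 1 / (Δ : ℝ) else 0)
              + (if p = p' then (1 : ℝ) else 0))) := by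
  have hcard : ((Δ : ℝ) + 1)⁻¹ * Fintype.card (Fin (Δ + 1)) ≤ 1 := by
    simp [inv_mul_cancel₀ (by positivity : (Δ : ℝ) + 1 ≠ 0)]
  have hΔ₀ : 0 ≤ 1 / (Δ : ℝ) := by positivity
  have hsum := (((PosSemidef.one (n := Fin Δ)).kronecker posSemidef_of_one).smul hΔ₀).add
    ((posSemidef_of_one.kronecker (posSemidef_one_sub_smul_of_one hcard)).smul hΔ₀)
  refine (congrArg PosSemidef ?_).mp hsum
  ext ⟨u, a⟩ ⟨v, b⟩
  have hΔ : (Δ : ℝ) ≠ 0 := by have := u.pos; positivity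
  by_cases huv : u = v <;> by_cases hab : a = b <;>
    simp [one_apply, huv, hab] <;> field_simp <;> ring

/-- The correlation matrix `Ψ` of the uniform proper `(Δ+1)`-edge-coloring of a star with
`Δ` edges, given by `Ψ((u,a),(v,b)) = −1/(Δ+1) + 𝟙[u≠v ∧ a≠b]/Δ + 𝟙[(u,a)=(v,b)]`, has
maximum eigenvalue at most `1 + 1/Δ`; equivalently (since `Ψ` is symmetric),
`(1 + 1/Δ)·I − Ψ` is positive semidefinite. -/
theorem statement7 (Δ : ℕ) (hΔ : 1 ≤ Δ) :
    Matrix.PosSemidef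
      ((1 + 1 / (Δ : ℝ)) • (1 : Matrix (Fin Δ × Fin (Δ + 1)) (Fin Δ × Fin (Δ + 1)) ℝ)
        - Matrix.of (fun p p' : Fin Δ × Fin (Δ + 1) =>
            -1 / ((Δ : ℝ) + 1) + (if p.1 ≠ p'.1 ∧ p.2 ≠ p'.2 then 1 / (Δ : ℝ) else 0)
              + (if p = p' then (1 : ℝ) else 0))) :=
  statement7_general Δ
end

section
/- Let μ be a distribution over [q]^E satisfying the conditional independence property for the line graph of G = (V,E). Then for any f : Ω(μ) → ℝ and any S, T ⊆ E with ∂S ∩ T = ∅ (where ∂S is the set of edges outside S adjacent to S), the conditional expectations commute: μ_S μ_T f = μ_T μ_S f. -/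
open scoped Classical

/-- Conditional expectation of `f` under `μ`, resampling the coordinates in `S`
given that the coordinates outside `S` are fixed to those of `σ`. -/
noncomputable def cExp {ι : Type*} [Fintype ι] [DecidableEq ι] {q : ℕ}
    (μ : (ι → Fin q) → ℝ) (f : (ι → Fin q) → ℝ) (S : Finset ι) (σ : ι → Fin q) : ℝ :=
  (∑ τ, if ∀ i ∉ S, τ i = σ i then μ τ * f τ else 0) /
    (∑ τ, if ∀ i ∉ S, τ i = σ i then μ τ else 0)

/-- The line graph of `G`: vertices are the edges of `G`, two distinct edges being
adjacent when they share an endpoint. -/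
def lineG {V : Type*} [Fintype V] [DecidableEq V] (G : SimpleGraph V) [DecidableRel G.Adj] :
    SimpleGraph ↥G.edgeFinset :=
  SimpleGraph.fromRel (fun e e' => ∃ v, v ∈ (e : Sym2 V) ∧ v ∈ (e' : Sym2 V))

/-! Write `Z_W(θ)` for the `μ`-weight of the configurations that agree with `θ` off `W`.
Resampling `S` in two stages, first `S \ T` and then `S ∩ T`, and using that `μ_T f` is
constant on the fibers of `S ∩ T`, the conditional independence of the spins on `S \ T` and
`T \ S` given those outside `S ∪ T` yields `μ_S μ_T f = μ_{S ∪ T} f`, which is symmetric in `S`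
and `T`. The hypothesis `∂S ∩ T = ∅` supplies that conditional independence: a walk in the line
graph from `S \ T` to `T \ S` leaves `S`, and the first edge it visits outside `S` lies in `∂S`,
hence outside `S ∪ T`. -/

theorem SimpleGraph.Walk.exists_mem_support_not_mem_union {V : Type*} {G : SimpleGraph V}
    {S T : Set V} (hST : ∀ e, (e ∉ S ∧ ∃ h ∈ S, G.Adj e h) → e ∉ T) {x y : V}
    (w : G.Walk x y) (hx : x ∈ S) (hy : y ∉ S) : ∃ c ∈ w.support, c ∉ S ∪ T := by
  obtain ⟨d, hd, hfst, hsnd⟩ := w.exists_boundary_dart S hx hy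
  exact ⟨d.snd, w.dart_snd_mem_support_of_mem_darts hd,
    fun h => h.elim hsnd (hST _ ⟨hsnd, d.fst, hfst, d.adj.symm⟩)⟩

section FiberSum

variable {ι α : Type*} [DecidableEq ι]

theorem agree_off_and_agree_off_iff {W₁ W₂ : Finset ι} (hW : Disjoint W₁ W₂) (θ a b : ι → α) :
    ((∀ i ∉ W₁, a i = θ i) ∧ ∀ i ∉ W₂, b i = a i) ↔
      a = W₂.piecewise θ b ∧ ∀ i ∉ W₁ ∪ W₂, b i = θ i := by
  constructor
  · rintro ⟨ha, hb⟩
    refine ⟨funext fun i => ?_, fun i hi => ?_⟩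
    · by_cases hi : i ∈ W₂
      · simpa [hi] using ha i (Finset.disjoint_right.1 hW hi)
      · simpa [hi] using (hb i hi).symm
    · rw [Finset.mem_union, not_or] at hi
      exact (hb i hi.2).trans (ha i hi.1)
  · rintro ⟨rfl, hb⟩
    refine ⟨fun i hi => ?_, fun i hi => by simp [hi]⟩
    by_cases hi₂ : i ∈ W₂
    · simp [hi₂]
    · simpa [hi₂] using hb i (by simp [hi, hi₂])

variable [Fintype ι] [Fintype α] [DecidableEq α]

noncomputable def fiberSum (g : (ι → α) → ℝ) (W : Finset ι) (θ : ι → α) : ℝ :=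
  ∑ τ, if ∀ i ∉ W, τ i = θ i then g τ else 0

theorem fiberSum_congr {g g' : (ι → α) → ℝ} {W : Finset ι} {θ : ι → α}
    (h : ∀ τ, (∀ i ∉ W, τ i = θ i) → g τ = g' τ) : fiberSum g W θ = fiberSum g' W θ :=
  Finset.sum_congr rfl fun τ _ => by split_ifs with hτ; exacts [h τ hτ, rfl]

theorem fiberSum_congr_base {g : (ι → α) → ℝ} {W : Finset ι} {θ θ' : ι → α}
    (h : ∀ i ∉ W, θ i = θ' i) : fiberSum g W θ = fiberSum g W θ' := by
  refine Finset.sum_congr rfl fun τ _ => if_congr ?_ rfl rfl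
  exact forall₂_congr fun i hi => by rw [h i hi]

theorem fiberSum_mul_const (g : (ι → α) → ℝ) (c : ℝ) (W : Finset ι) (θ : ι → α) :
    fiberSum (fun τ => g τ * c) W θ = fiberSum g W θ * c := by
  simp only [fiberSum, Finset.sum_mul, ite_zero_mul]

theorem fiberSum_pos {μ : (ι → α) → ℝ} (hμ : ∀ τ, 0 ≤ μ τ) (W : Finset ι) {θ : ι → α}
    (hθ : 0 < μ θ) : 0 < fiberSum μ W θ :=
  Finset.sum_pos' (fun τ _ => by split_ifs <;> simp [hμ τ])
    ⟨θ, Finset.mem_univ θ, by simpa using hθ⟩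

theorem fiberSum_mul_eq_zero_of_eq_zero {μ : (ι → α) → ℝ} (hμ : ∀ τ, 0 ≤ μ τ)
    (f : (ι → α) → ℝ) {W : Finset ι} {θ : ι → α} (h : fiberSum μ W θ = 0) :
    fiberSum (fun τ => μ τ * f τ) W θ = 0 := by
  have hzero := (Finset.sum_eq_zero_iff_of_nonneg
    fun τ _ => by split_ifs <;> simp [hμ τ]).1 h
  refine Finset.sum_eq_zero fun τ _ => ?_
  have := hzero τ (Finset.mem_univ τ)
  split_ifs at this ⊢ <;> simp [this]

theorem fiberSum_union {W₁ W₂ : Finset ι} (hW : Disjoint W₁ W₂) (g : (ι → α) → ℝ)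
    (θ : ι → α) : fiberSum g (W₁ ∪ W₂) θ = fiberSum (fiberSum g W₂) W₁ θ := by
  calc fiberSum g (W₁ ∪ W₂) θ
      = ∑ b : ι → α, ∑ a : ι → α,
          if a = W₂.piecewise θ b ∧ ∀ i ∉ W₁ ∪ W₂, b i = θ i then g b else 0 := by
        simp only [ite_and, Finset.sum_ite_eq', Finset.mem_univ, if_true, fiberSum]
    _ = ∑ a : ι → α, ∑ b : ι → α,
          if (∀ i ∉ W₁, a i = θ i) ∧ ∀ i ∉ W₂, b i = a i then g b else 0 := by
        rw [Finset.sum_comm]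
        simp only [agree_off_and_agree_off_iff hW]
    _ = fiberSum (fiberSum g W₂) W₁ θ := by
        simp only [fiberSum, ite_and, Finset.sum_ite_irrel, Finset.sum_const_zero]

theorem sum_ite_forall_mem_eq_fiberSum (μ : (ι → α) → ℝ) {P W : Finset ι} (h : P = Wᶜ)
    (θ : ι → α) :
    (∑ τ, if ∀ i ∈ P, τ i = θ i then μ τ else 0) = fiberSum μ W θ := by
  simp only [fiberSum, h, Finset.mem_compl]

theorem sum_ite_and_eq_fiberSum (μ : (ι → α) → ℝ) {P Q W : Finset ι} (h : P ∪ Q = Wᶜ)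
    (θ : ι → α) :
    (∑ τ, if (∀ i ∈ P, τ i = θ i) ∧ ∀ i ∈ Q, τ i = θ i then μ τ else 0) = fiberSum μ W θ := by
  simp only [← Finset.forall_mem_union, sum_ite_forall_mem_eq_fiberSum μ h]

end FiberSum

section CondExp

variable {ι : Type*} [Fintype ι] [DecidableEq ι] {q : ℕ}

theorem cExp_eq_div (μ f : (ι → Fin q) → ℝ) (W : Finset ι) (θ : ι → Fin q) :
    cExp μ f W θ = fiberSum (fun τ => μ τ * f τ) W θ / fiberSum μ W θ := rfl

theorem cExp_congr_base (μ f : (ι → Fin q) → ℝ) {W : Finset ι} {θ θ' : ι → Fin q}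
    (h : ∀ i ∉ W, θ i = θ' i) : cExp μ f W θ = cExp μ f W θ' := by
  rw [cExp_eq_div, cExp_eq_div, fiberSum_congr_base h, fiberSum_congr_base (g := μ) h]

theorem fiberSum_mul_cExp {μ : (ι → Fin q) → ℝ} (hμ : ∀ τ, 0 ≤ μ τ) (f : (ι → Fin q) → ℝ)
    (W : Finset ι) (θ : ι → Fin q) :
    fiberSum μ W θ * cExp μ f W θ = fiberSum (fun τ => μ τ * f τ) W θ := by
  rcases eq_or_ne (fiberSum μ W θ) 0 with h | h
  · rw [h, zero_mul, fiberSum_mul_eq_zero_of_eq_zero hμ f h]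
  · rw [cExp_eq_div, mul_div_cancel₀ _ h]

theorem fiberSum_mul_cExp_of_subset (μ f : (ι → Fin q) → ℝ) {W W' : Finset ι} (hW : W' ⊆ W)
    (θ : ι → Fin q) :
    fiberSum (fun τ => μ τ * cExp μ f W τ) W' θ = fiberSum μ W' θ * cExp μ f W θ := by
  rw [← fiberSum_mul_const]
  exact fiberSum_congr fun τ hτ => by
    rw [cExp_congr_base μ f fun i hi => hτ i fun hi' => hi (hW hi')]

/-- The spins on `S \ T` and on `T \ S` are conditionally independent given those outside
`S ∪ T`, with the denominators cleared. -/
def CondIndep (μ : (ι → Fin q) → ℝ) (S T : Finset ι) : Prop :=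
  ∀ θ, 0 < fiberSum μ (S ∪ T) θ →
    fiberSum μ (S ∩ T) θ * fiberSum μ (S ∪ T) θ = fiberSum μ S θ * fiberSum μ T θ

theorem CondIndep.symm {μ : (ι → Fin q) → ℝ} {S T : Finset ι} (h : CondIndep μ S T) :
    CondIndep μ T S := fun θ hθ => by
  rw [Finset.union_comm] at hθ ⊢
  rw [Finset.inter_comm, mul_comm (fiberSum μ T θ), h θ hθ]

theorem cExp_cExp_of_condIndep {μ : (ι → Fin q) → ℝ} (hμ : ∀ τ, 0 ≤ μ τ) {S T : Finset ι}
    (hST : CondIndep μ S T) (f : (ι → Fin q) → ℝ) {σ : ι → Fin q} (hσ : 0 < μ σ) :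
    cExp μ (fun τ => cExp μ f T τ) S σ = cExp μ f (S ∪ T) σ := by
  set Z := fiberSum μ (S ∪ T) σ
  have hZ : 0 < Z := fiberSum_pos hμ _ hσ
  have inner : ∀ θ, (∀ i ∉ S \ T, θ i = σ i) →
      fiberSum (fun τ => μ τ * cExp μ f T τ) (S ∩ T) θ * Z
        = fiberSum (fun τ => μ τ * f τ) T θ * fiberSum μ S σ := by
    intro θ hθ
    have hS : fiberSum μ S θ = fiberSum μ S σ :=
      fiberSum_congr_base fun i hi => hθ i fun h => hi (Finset.sdiff_subset h)
    have hU : fiberSum μ (S ∪ T) θ = Z :=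
      fiberSum_congr_base fun i hi => hθ i fun h => hi (Finset.mem_union_left T
        (Finset.sdiff_subset h))
    have hfac := hST θ (hU ▸ hZ)
    rw [hS, hU] at hfac
    rw [fiberSum_mul_cExp_of_subset μ f Finset.inter_subset_right, mul_right_comm, hfac,
      mul_assoc, fiberSum_mul_cExp hμ, mul_comm]
  have hnum : fiberSum (fun τ => μ τ * cExp μ f T τ) S σ * Z
      = fiberSum (fun τ => μ τ * f τ) (S ∪ T) σ * fiberSum μ S σ := by
    conv_lhs => rw [← Finset.sdiff_union_inter S T]
    rw [fiberSum_union (Finset.disjoint_sdiff_inter S T),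
      ← fiberSum_mul_const, fiberSum_congr fun θ hθ => inner θ hθ, fiberSum_mul_const,
      ← fiberSum_union Finset.sdiff_disjoint, Finset.sdiff_union_self_eq_union]
  rw [cExp_eq_div, cExp_eq_div, div_eq_div_iff (fiberSum_pos hμ S hσ).ne' hZ.ne', hnum]

end CondExp

theorem statement11_general {V : Type*} [Fintype V] [DecidableEq V]
    (G : SimpleGraph V) [DecidableRel G.Adj] (q : ℕ)
    (μ : (↥G.edgeFinset → Fin q) → ℝ)
    (hnn : ∀ σ, 0 ≤ μ σ)
    (hCI : ∀ A B C : Finset ↥G.edgeFinset,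
      Disjoint A B → Disjoint A C → Disjoint B C →
      (∀ a ∈ A, ∀ b ∈ B, ∀ w : (lineG G).Walk a b, ∃ c ∈ C, c ∈ w.support) →
      ∀ η : ↥G.edgeFinset → Fin q,
        0 < (∑ τ, if ∀ i ∈ C, τ i = η i then μ τ else 0) →
        ∀ ζ : ↥G.edgeFinset → Fin q,
          (∑ τ, if (∀ i ∈ A ∪ B, τ i = ζ i) ∧ (∀ i ∈ C, τ i = η i) then μ τ else 0)
              / (∑ τ, if ∀ i ∈ C, τ i = η i then μ τ else 0)
            = ((∑ τ, if (∀ i ∈ A, τ i = ζ i) ∧ (∀ i ∈ C, τ i = η i) then μ τ else 0)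
              / (∑ τ, if ∀ i ∈ C, τ i = η i then μ τ else 0))
            * ((∑ τ, if (∀ i ∈ B, τ i = ζ i) ∧ (∀ i ∈ C, τ i = η i) then μ τ else 0)
              / (∑ τ, if ∀ i ∈ C, τ i = η i then μ τ else 0)))
    (S T : Finset ↥G.edgeFinset)
    (hbd : ∀ e, (e ∉ S ∧ ∃ h ∈ S, (lineG G).Adj e h) → e ∉ T)
    (f : (↥G.edgeFinset → Fin q) → ℝ) :
    ∀ σ, 0 < μ σ →
      cExp μ (fun τ => cExp μ f T τ) S σ = cExp μ (fun τ => cExp μ f S τ) T σ := by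
  have hsep : ∀ a ∈ S \ T, ∀ b ∈ T \ S, ∀ w : (lineG G).Walk a b,
      ∃ c ∈ (S ∪ T)ᶜ, c ∈ w.support := fun a ha b hb w => by
    obtain ⟨c, hc, hcST⟩ := w.exists_mem_support_not_mem_union (S := ↑S) (T := ↑T) hbd
      (Finset.mem_sdiff.1 ha).1 (Finset.mem_sdiff.1 hb).2
    exact ⟨c, by simpa using hcST, hc⟩
  have hST : CondIndep μ S T := fun θ hθ => by
    have h := hCI (S \ T) (T \ S) (S ∪ T)ᶜ disjoint_sdiff_sdiff
      (disjoint_compl_right_iff.2 (Finset.sdiff_subset.trans Finset.subset_union_left))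
      (disjoint_compl_right_iff.2 (Finset.sdiff_subset.trans Finset.subset_union_right))
      hsep θ (by rwa [sum_ite_forall_mem_eq_fiberSum μ rfl]) θ
    rw [sum_ite_forall_mem_eq_fiberSum μ rfl,
      sum_ite_and_eq_fiberSum μ (W := S ∩ T) (by ext; simp; tauto),
      sum_ite_and_eq_fiberSum μ (W := T) (by ext; simp; tauto),
      sum_ite_and_eq_fiberSum μ (W := S) (by ext; simp; tauto)] at h
    field_simp at h
    linarith
  intro σ hσ
  rw [cExp_cExp_of_condIndep hnn hST f hσ, cExp_cExp_of_condIndep hnn hST.symm f hσ,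
    Finset.union_comm]

/-- Commutation of conditional expectations when `∂S ∩ T = ∅`:
if `μ` is a distribution over `[q]^E` satisfying the conditional independence property
for the line graph of `G`, and `S, T ⊆ E` are such that no edge of the exterior boundary
`∂S = {e ∉ S : ∃ h ∈ S, e ∼ h}` lies in `T`, then `μ_S μ_T f = μ_T μ_S f` on the support
of `μ`. -/
theorem statement11 {V : Type*} [Fintype V] [DecidableEq V]
    (G : SimpleGraph V) [DecidableRel G.Adj] (q : ℕ)
    (μ : (↥G.edgeFinset → Fin q) → ℝ)
    (hnn : ∀ σ, 0 ≤ μ σ) (hsum : ∑ σ, μ σ = 1)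
    (hCI : ∀ A B C : Finset ↥G.edgeFinset,
      Disjoint A B → Disjoint A C → Disjoint B C →
      (∀ a ∈ A, ∀ b ∈ B, ∀ w : (lineG G).Walk a b, ∃ c ∈ C, c ∈ w.support) →
      ∀ η : ↥G.edgeFinset → Fin q,
        0 < (∑ τ, if ∀ i ∈ C, τ i = η i then μ τ else 0) →
        ∀ ζ : ↥G.edgeFinset → Fin q,
          (∑ τ, if (∀ i ∈ A ∪ B, τ i = ζ i) ∧ (∀ i ∈ C, τ i = η i) then μ τ else 0)
              / (∑ τ, if ∀ i ∈ C, τ i = η i then μ τ else 0)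
            = ((∑ τ, if (∀ i ∈ A, τ i = ζ i) ∧ (∀ i ∈ C, τ i = η i) then μ τ else 0)
              / (∑ τ, if ∀ i ∈ C, τ i = η i then μ τ else 0))
            * ((∑ τ, if (∀ i ∈ B, τ i = ζ i) ∧ (∀ i ∈ C, τ i = η i) then μ τ else 0)
              / (∑ τ, if ∀ i ∈ C, τ i = η i then μ τ else 0)))
    (S T : Finset ↥G.edgeFinset)
    (hbd : ∀ e, (e ∉ S ∧ ∃ h ∈ S, (lineG G).Adj e h) → e ∉ T)
    (f : (↥G.edgeFinset → Fin q) → ℝ) :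
    ∀ σ, 0 < μ σ →
      cExp μ (fun τ => cExp μ f T τ) S σ = cExp μ (fun τ => cExp μ f S τ) T σ :=
  statement11_general G q μ hnn hCI S T hbd f
end

section
/- Let μ be the uniform distribution over proper q-edge-colorings of a tree 𝕋 = (V,E), q ≥ Δ+1 where Δ is the maximum degree, and let H ⊆ E induce a connected subtree containing the root, with ν = μ_H. For any g : Ω(ν) → ℝ and f(σ) := g(σ_H), and any single edge h ∈ H: E_μ[Var_h[f]] ≤ q · E_ν[Var_h[g]]. -/
open scoped Classical

/-- Expectation of `f` under a weight function `μ`. -/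
noncomputable def expct {α : Type*} [Fintype α] (μ f : α → ℝ) : ℝ := ∑ x, μ x * f x

/-- Conditional variance of `f` on `S` given the configuration `σ` outside `S`. -/
noncomputable def cVar {ι : Type*} [Fintype ι] [DecidableEq ι] {q : ℕ}
    (μ : (ι → Fin q) → ℝ) (f : (ι → Fin q) → ℝ) (S : Finset ι) (σ : ι → Fin q) : ℝ :=
  cExp μ (fun τ => f τ ^ 2) S σ - (cExp μ f S σ) ^ 2

/-- The uniform distribution over `{x | P x}`. -/
noncomputable def unif {α : Type*} [Fintype α] (P : α → Prop) : α → ℝ :=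
  fun x => (if P x then (1 : ℝ) else 0) / ((Finset.univ.filter fun y => P y).card : ℝ)

/-- The pushforward (marginal) of `μ` along a map `m`. -/
noncomputable def pushf {α β : Type*} [Fintype α] (μ : α → ℝ) (m : α → β) : β → ℝ :=
  fun b => ∑ a, if m a = b then μ a else 0

/-- `σ` is a proper edge coloring of `G`. -/
def IsProperEC {V : Type*} [Fintype V] [DecidableEq V] (G : SimpleGraph V)
    [DecidableRel G.Adj] {q : ℕ} (σ : ↥G.edgeFinset → Fin q) : Prop :=
  ∀ e e' : ↥G.edgeFinset, e ≠ e' → (∃ v, v ∈ (e : Sym2 V) ∧ v ∈ (e' : Sym2 V)) →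
    σ e ≠ σ e'

section Aux

variable {ι : Type*} [Fintype ι] [DecidableEq ι] {q : ℕ}

lemma sum_cond_single (i : ι) (σ : ι → Fin q) (F : (ι → Fin q) → ℝ) :
    (∑ τ, if ∀ j ∉ ({i} : Finset ι), τ j = σ j then F τ else 0)
      = ∑ t, F (Function.update σ i t) := by
  rw [← Finset.sum_filter]
  refine Finset.sum_nbij' (fun τ => τ i) (fun t => Function.update σ i t) ?_ ?_ ?_ ?_ ?_
  · intro τ _; exact Finset.mem_univ _
  · intro t _
    simp only [Finset.mem_filter, Finset.mem_univ, true_and, Finset.mem_singleton]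
    intro j hj
    exact Function.update_of_ne hj _ _
  · intro τ hτ
    simp only [Finset.mem_filter, Finset.mem_univ, true_and, Finset.mem_singleton] at hτ
    show Function.update σ i (τ i) = τ
    funext j
    by_cases hj : j = i
    · subst hj; simp
    · rw [Function.update_of_ne hj, hτ j hj]
  · intro t _; simp
  · intro τ hτ
    simp only [Finset.mem_filter, Finset.mem_univ, true_and, Finset.mem_singleton] at hτ
    show F τ = F (Function.update σ i (τ i))
    congr 1
    funext j
    by_cases hj : j = i
    · subst hj; simp
    · rw [Function.update_of_ne hj, hτ j hj]

lemma cExp_single (μ f : (ι → Fin q) → ℝ) (i : ι) (σ : ι → Fin q) :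
    cExp μ f {i} σ = (∑ t, μ (Function.update σ i t) * f (Function.update σ i t)) /
      (∑ t, μ (Function.update σ i t)) := by
  unfold cExp
  rw [sum_cond_single i σ (fun τ => μ τ * f τ), sum_cond_single i σ μ]

lemma cExp_update_eq (μ f : (ι → Fin q) → ℝ) (i : ι) (σ : ι → Fin q) (t : Fin q) :
    cExp μ f {i} (Function.update σ i t) = cExp μ f {i} σ := by
  rw [cExp_single, cExp_single]
  simp [Function.update_idem]

lemma cVar_update_eq (μ f : (ι → Fin q) → ℝ) (i : ι) (σ : ι → Fin q) (t : Fin q) :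
    cVar μ f {i} (Function.update σ i t) = cVar μ f {i} σ := by
  unfold cVar
  rw [cExp_update_eq, cExp_update_eq]

end Aux

noncomputable def Nval {q : ℕ} (w x : Fin q → ℝ) : ℝ :=
  (∑ t, w t * x t ^ 2) - (∑ t, w t * x t) ^ 2 / (∑ t, w t)

section NvalLemmas

variable {q : ℕ}

lemma sum_sq_expand (w x : Fin q → ℝ) (c : ℝ) :
    ∑ t, w t * (x t - c) ^ 2
      = (∑ t, w t * x t ^ 2) - 2 * c * (∑ t, w t * x t) + c ^ 2 * (∑ t, w t) := by
  calc ∑ t, w t * (x t - c) ^ 2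
      = ∑ t, (w t * x t ^ 2 - 2 * c * (w t * x t) + c ^ 2 * w t) :=
        Finset.sum_congr rfl fun t _ => by ring
    _ = _ := by
        rw [Finset.sum_add_distrib, Finset.sum_sub_distrib, ← Finset.mul_sum, ← Finset.mul_sum]

lemma Nval_le {w : Fin q → ℝ} (hw : ∀ t, 0 ≤ w t) (x : Fin q → ℝ) (c : ℝ) :
    Nval w x ≤ ∑ t, w t * (x t - c) ^ 2 := by
  by_cases hD : (∑ t, w t) = 0
  · have hz : ∀ t, w t = 0 := fun t =>
      (Finset.sum_eq_zero_iff_of_nonneg (fun t _ => hw t)).1 hD t (Finset.mem_univ t)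
    simp [Nval, hz]
  · have hD' : 0 < ∑ t, w t :=
      lt_of_le_of_ne (Finset.sum_nonneg fun t _ => hw t) (Ne.symm hD)
    rw [sum_sq_expand, Nval]
    have key : 2 * c * (∑ t, w t * x t) - c ^ 2 * (∑ t, w t)
        ≤ (∑ t, w t * x t) ^ 2 / (∑ t, w t) := by
      rw [le_div_iff₀ hD']
      nlinarith [sq_nonneg ((∑ t, w t * x t) - c * (∑ t, w t))]
    linarith

lemma Nval_eq {w : Fin q → ℝ} (hD : (∑ t, w t) ≠ 0) (x : Fin q → ℝ) :
    Nval w x = ∑ t, w t * (x t - (∑ t, w t * x t) / (∑ t, w t)) ^ 2 := by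
  rw [sum_sq_expand, Nval]
  field_simp
  ring

lemma Nval_superadd {α : Type*} (s : Finset α) (w : α → Fin q → ℝ)
    (hw : ∀ j ∈ s, ∀ t, 0 ≤ w j t) (x : Fin q → ℝ) :
    ∑ j ∈ s, Nval (w j) x ≤ Nval (fun t => ∑ j ∈ s, w j t) x := by
  by_cases hD : (∑ t, ∑ j ∈ s, w j t) = 0
  · have hW : ∀ t, ∑ j ∈ s, w j t = 0 := fun t =>
      (Finset.sum_eq_zero_iff_of_nonneg
        (fun t _ => Finset.sum_nonneg fun j hj => hw j hj t)).1 hD t (Finset.mem_univ t)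
    have hz : ∀ j ∈ s, ∀ t, w j t = 0 := fun j hj t =>
      (Finset.sum_eq_zero_iff_of_nonneg (fun j hj => hw j hj t)).1 (hW t) j hj
    have h1 : ∀ j ∈ s, Nval (w j) x = 0 := fun j hj => by simp [Nval, hz j hj]
    rw [Finset.sum_congr rfl h1]
    simp [Nval, hW]
  · rw [Nval_eq hD]
    calc ∑ j ∈ s, Nval (w j) x
        ≤ ∑ j ∈ s, ∑ t, w j t *
            (x t - (∑ t, (∑ j ∈ s, w j t) * x t) / (∑ t, ∑ j ∈ s, w j t)) ^ 2 :=
          Finset.sum_le_sum fun j hj => Nval_le (hw j hj) x _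
      _ = _ := by
          rw [Finset.sum_comm]
          exact Finset.sum_congr rfl fun t _ => (Finset.sum_mul _ _ _).symm

end NvalLemmas

section Main

variable {ι : Type*} [Fintype ι] [DecidableEq ι] {q : ℕ}

lemma sum_sum_update (i : ι) (F : (ι → Fin q) → ℝ) :
    ∑ σ : ι → Fin q, ∑ t, F (Function.update σ i t) = q * ∑ σ, F σ := by
  have h1 : ∑ p : (ι → Fin q) × Fin q, F (Function.update p.1 i p.2)
      = ∑ p : (ι → Fin q) × Fin q, F p.1 := by
    refine Finset.sum_nbij' (fun p => (Function.update p.1 i p.2, p.1 i))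
      (fun p => (Function.update p.1 i p.2, p.1 i))
      (fun p _ => Finset.mem_univ _) (fun p _ => Finset.mem_univ _) ?_ ?_ ?_
    · intro p _
      show (Function.update (Function.update p.1 i p.2) i (p.1 i),
        Function.update p.1 i p.2 i) = p
      simp [Function.update_idem]
    · intro p _
      show (Function.update (Function.update p.1 i p.2) i (p.1 i),
        Function.update p.1 i p.2 i) = p
      simp [Function.update_idem]
    · intro p _
      rfl
  calc ∑ σ : ι → Fin q, ∑ t, F (Function.update σ i t)
      = ∑ p : (ι → Fin q) × Fin q, F (Function.update p.1 i p.2) := by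
        rw [Fintype.sum_prod_type]
    _ = ∑ p : (ι → Fin q) × Fin q, F p.1 := h1
    _ = q * ∑ σ, F σ := by
        rw [Fintype.sum_prod_type]
        simp [Finset.sum_const, Finset.card_univ, Finset.mul_sum, mul_comm]

lemma D_mul_cVarVal {w : Fin q → ℝ} (hw : ∀ t, 0 ≤ w t) (x : Fin q → ℝ) :
    (∑ t, w t) * ((∑ t, w t * x t ^ 2) / (∑ t, w t)
      - ((∑ t, w t * x t) / (∑ t, w t)) ^ 2) = Nval w x := by
  by_cases hD : (∑ t, w t) = 0
  · have hz : ∀ t, w t = 0 := fun t =>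
      (Finset.sum_eq_zero_iff_of_nonneg (fun t _ => hw t)).1 hD t (Finset.mem_univ t)
    simp [Nval, hz]
  · rw [Nval]
    field_simp

lemma q_mul_expct_cVar (μ : (ι → Fin q) → ℝ) (hμ : ∀ σ, 0 ≤ μ σ)
    (f : (ι → Fin q) → ℝ) (i : ι) :
    (q : ℝ) * expct μ (fun σ => cVar μ f {i} σ)
      = ∑ σ : ι → Fin q,
          Nval (fun t => μ (Function.update σ i t)) (fun t => f (Function.update σ i t)) := by
  have h0 : expct μ (fun σ => cVar μ f {i} σ) = ∑ σ, μ σ * cVar μ f {i} σ := rfl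
  rw [h0, ← sum_sum_update i (fun σ => μ σ * cVar μ f {i} σ)]
  refine Finset.sum_congr rfl fun σ _ => ?_
  calc ∑ t, μ (Function.update σ i t) * cVar μ f {i} (Function.update σ i t)
      = ∑ t, μ (Function.update σ i t) * cVar μ f {i} σ := by
        exact Finset.sum_congr rfl fun t _ => by rw [cVar_update_eq]
    _ = (∑ t, μ (Function.update σ i t)) * cVar μ f {i} σ := (Finset.sum_mul _ _ _).symm
    _ = _ := by
        rw [cVar, cExp_single, cExp_single]
        exact D_mul_cVarVal (fun t => hμ _) _

variable {κ : Type*} [Fintype κ] [DecidableEq κ]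

lemma restrict_update {emb : κ → ι} (hemb : Function.Injective emb)
    (σ : ι → Fin q) (h : κ) (t : Fin q) :
    (fun k => Function.update σ (emb h) t (emb k))
      = Function.update (fun k => σ (emb k)) h t := by
  funext k
  by_cases hk : k = h
  · subst hk; simp
  · rw [Function.update_of_ne (fun hc => hk (hemb hc)), Function.update_of_ne hk]

lemma pushf_update (μ : (ι → Fin q) → ℝ) {emb : κ → ι} (hemb : Function.Injective emb)
    (h : κ) (τ : κ → Fin q) (t : Fin q) :
    pushf μ (fun σ k => σ (emb k)) (Function.update τ h t)
      = ∑ σ ∈ Finset.univ.filter (fun σ : ι → Fin q => (fun k => σ (emb k)) = τ),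
          μ (Function.update σ (emb h) t) := by
  unfold pushf
  rw [← @Finset.sum_filter (ι → Fin q) ℝ Finset.univ _
      (fun a => (fun σ k => σ (emb k)) a = Function.update τ h t)
      (fun a => Classical.propDecidable _) μ]
  refine Finset.sum_nbij' (fun σ => Function.update σ (emb h) (τ h))
    (fun σ => Function.update σ (emb h) t) ?_ ?_ ?_ ?_ ?_
  · intro σ hσ
    simp only [Finset.mem_filter, Finset.mem_univ, true_and] at hσ ⊢
    rw [restrict_update hemb, hσ]
    simp [Function.update_idem, Function.update_eq_self]
  · intro σ hσ
    simp only [Finset.mem_filter, Finset.mem_univ, true_and] at hσ ⊢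
    rw [restrict_update hemb, hσ]
  · intro σ hσ
    simp only [Finset.mem_filter, Finset.mem_univ, true_and] at hσ
    have hσh : σ (emb h) = t := by
      have := congrFun hσ h
      simpa using this
    show Function.update (Function.update σ (emb h) (τ h)) (emb h) t = σ
    rw [Function.update_idem, ← hσh, Function.update_eq_self]
  · intro σ hσ
    simp only [Finset.mem_filter, Finset.mem_univ, true_and] at hσ
    have hσh : σ (emb h) = τ h := congrFun hσ h
    show Function.update (Function.update σ (emb h) t) (emb h) (τ h) = σ
    rw [Function.update_idem, ← hσh, Function.update_eq_self]
  · intro σ hσ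
    simp only [Finset.mem_filter, Finset.mem_univ, true_and] at hσ
    have hσh : σ (emb h) = t := by
      have := congrFun hσ h
      simpa using this
    show μ σ = μ (Function.update (Function.update σ (emb h) (τ h)) (emb h) t)
    rw [Function.update_idem, ← hσh, Function.update_eq_self]

lemma pushf_nonneg (μ : (ι → Fin q) → ℝ) (hμ : ∀ σ, 0 ≤ μ σ) (m : (ι → Fin q) → κ → Fin q)
    (τ : κ → Fin q) : 0 ≤ pushf μ m τ :=
  Finset.sum_nonneg fun σ _ => by split <;> [exact hμ σ; exact le_rfl]

lemma abstract_main (μ : (ι → Fin q) → ℝ) (hμ : ∀ σ, 0 ≤ μ σ) (hq : 0 < q)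
    {emb : κ → ι} (hemb : Function.Injective emb) (g : (κ → Fin q) → ℝ) (h : κ) :
    expct μ (fun σ => cVar μ (fun σ => g (fun k => σ (emb k))) {emb h} σ)
      ≤ expct (pushf μ (fun σ k => σ (emb k)))
          (fun τ => cVar (pushf μ (fun σ k => σ (emb k))) g {h} τ) := by
  set ν := pushf μ (fun σ k => σ (emb k)) with hν
  have hν0 : ∀ τ, 0 ≤ ν τ := pushf_nonneg μ hμ _
  have hL := q_mul_expct_cVar μ hμ (fun σ => g (fun k => σ (emb k))) (emb h)
  have hR := q_mul_expct_cVar ν hν0 g h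
  have hx : ∀ σ : ι → Fin q, ∀ t,
      (fun σ' : ι → Fin q => g (fun k => σ' (emb k))) (Function.update σ (emb h) t)
        = g (Function.update (fun k => σ (emb k)) h t) := by
    intro σ t
    simp only
    rw [restrict_update hemb]
  have key : (∑ σ : ι → Fin q,
      Nval (fun t => μ (Function.update σ (emb h) t))
        (fun t => g (Function.update (fun k => σ (emb k)) h t)))
      ≤ ∑ τ : κ → Fin q,
      Nval (fun t => ν (Function.update τ h t)) (fun t => g (Function.update τ h t)) := by
    rw [← Finset.sum_fiberwise Finset.univ (fun σ : ι → Fin q => (fun k => σ (emb k)))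
      (fun σ => Nval (fun t => μ (Function.update σ (emb h) t))
        (fun t => g (Function.update (fun k => σ (emb k)) h t)))]
    refine Finset.sum_le_sum fun τ _ => ?_
    have step1 : (∑ σ ∈ Finset.univ.filter (fun σ : ι → Fin q => (fun k => σ (emb k)) = τ),
        Nval (fun t => μ (Function.update σ (emb h) t))
          (fun t => g (Function.update (fun k => σ (emb k)) h t)))
        = ∑ σ ∈ Finset.univ.filter (fun σ : ι → Fin q => (fun k => σ (emb k)) = τ),
        Nval (fun t => μ (Function.update σ (emb h) t))
          (fun t => g (Function.update τ h t)) := by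
      refine Finset.sum_congr rfl fun σ hσ => ?_
      simp only [Finset.mem_filter, Finset.mem_univ, true_and] at hσ
      rw [hσ]
    rw [step1]
    calc _ ≤ Nval (fun t => ∑ σ ∈ Finset.univ.filter
            (fun σ : ι → Fin q => (fun k => σ (emb k)) = τ), μ (Function.update σ (emb h) t))
          (fun t => g (Function.update τ h t)) :=
        Nval_superadd _ _ (fun σ _ t => hμ _) _
      _ = _ := by
        congr 1
        funext t
        rw [← pushf_update μ hemb h τ t]
  have hfinal : (q : ℝ) * expct μ (fun σ => cVar μ (fun σ => g (fun k => σ (emb k))) {emb h} σ)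
      ≤ (q : ℝ) * expct ν (fun τ => cVar ν g {h} τ) := by
    rw [hL, hR]
    calc (∑ σ : ι → Fin q,
        Nval (fun t => μ (Function.update σ (emb h) t))
          (fun t => (fun σ' : ι → Fin q => g (fun k => σ' (emb k))) (Function.update σ (emb h) t)))
        = ∑ σ : ι → Fin q,
        Nval (fun t => μ (Function.update σ (emb h) t))
          (fun t => g (Function.update (fun k => σ (emb k)) h t)) := by
          refine Finset.sum_congr rfl fun σ _ => ?_
          congr 1
          funext t
          exact hx σ t
      _ ≤ _ := key
  have hqpos : (0 : ℝ) < (q : ℝ) := by exact_mod_cast hq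
  exact le_of_mul_le_mul_left hfinal hqpos

lemma cVar_nonneg (μ : (ι → Fin q) → ℝ) (hμ : ∀ σ, 0 ≤ μ σ)
    (f : (ι → Fin q) → ℝ) (S : Finset ι) (σ : ι → Fin q) : 0 ≤ cVar μ f S σ := by
  unfold cVar cExp
  set P : (ι → Fin q) → Prop := fun τ => ∀ i ∉ S, τ i = σ i with hP
  set D := ∑ τ, if P τ then μ τ else 0 with hD
  set N1 := ∑ τ, if P τ then μ τ * f τ else 0 with hN1
  set N2 := ∑ τ, if P τ then μ τ * f τ ^ 2 else 0 with hN2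
  have hCS : N1 ^ 2 ≤ D * N2 := by
    have := Finset.sum_mul_sq_le_sq_mul_sq Finset.univ
      (fun τ => Real.sqrt (if P τ then μ τ else 0))
      (fun τ => Real.sqrt (if P τ then μ τ else 0) * f τ)
    have e1 : ∀ τ : ι → Fin q, Real.sqrt (if P τ then μ τ else 0) *
        (Real.sqrt (if P τ then μ τ else 0) * f τ) = (if P τ then μ τ * f τ else 0) := by
      intro τ
      rw [← mul_assoc, Real.mul_self_sqrt (by split <;> [exact hμ τ; exact le_rfl])]
      split <;> simp
    have e2 : ∀ τ : ι → Fin q, Real.sqrt (if P τ then μ τ else 0) ^ 2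
        = (if P τ then μ τ else 0) := fun τ =>
      Real.sq_sqrt (by split <;> [exact hμ τ; exact le_rfl])
    have e3 : ∀ τ : ι → Fin q, (Real.sqrt (if P τ then μ τ else 0) * f τ) ^ 2
        = (if P τ then μ τ * f τ ^ 2 else 0) := by
      intro τ
      rw [mul_pow, e2]
      split <;> simp
    simp only [e1, e2, e3] at this
    exact this
  have hDnn : 0 ≤ D := Finset.sum_nonneg fun τ _ => by split <;> [exact hμ τ; exact le_rfl]
  by_cases hD0 : D = 0
  · simp [hD0]
  · have hDpos : 0 < D := lt_of_le_of_ne hDnn (Ne.symm hD0)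
    rw [sub_nonneg, div_pow]
    rw [div_le_div_iff₀ (by positivity) hDpos]
    nlinarith [hCS, hDpos]

end Main

/-- Single-edge conditional-variance comparison under marginalization: with `μ` the uniform
distribution over proper `q`-edge-colorings of a tree `G` (max degree `Δ`, `q ≥ Δ+1`),
`H` a connected subtree containing the root `r`, `ν = μ_H`, `g` a function of colorings
of `H` and `f(σ) := g(σ_H)` its lift, for every edge `h ∈ H`:
`E_μ[Var_h[f]] ≤ q · E_ν[Var_h[g]]`. -/
theorem statement14 {V : Type*} [Fintype V] [DecidableEq V]
    (G : SimpleGraph V) [DecidableRel G.Adj] (htree : G.IsTree)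
    (Δ q : ℕ) (hdeg : ∀ v, G.degree v ≤ Δ) (hq : Δ + 1 ≤ q)
    (r : V) (H : Finset (Sym2 V)) (hH : H ⊆ G.edgeFinset)
    (hsub : ∃ H' : G.Subgraph,
      H'.edgeSet = (H : Set (Sym2 V)) ∧ H'.Connected ∧ r ∈ H'.verts)
    (g : ((↥H) → Fin q) → ℝ)
    (e0 : Sym2 V) (he : e0 ∈ H) :
    expct (unif fun σ : ↥G.edgeFinset → Fin q => IsProperEC G σ)
        (fun σ => cVar (unif fun σ' : ↥G.edgeFinset → Fin q => IsProperEC G σ')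
          (fun σ' => g fun e : ↥H => σ' ⟨e.1, hH e.2⟩)
          {(⟨e0, hH he⟩ : ↥G.edgeFinset)} σ)
      ≤ q * expct (pushf (unif fun σ : ↥G.edgeFinset → Fin q => IsProperEC G σ)
            (fun σ (e : ↥H) => σ ⟨e.1, hH e.2⟩))
          (fun τ => cVar (pushf (unif fun σ : ↥G.edgeFinset → Fin q => IsProperEC G σ)
              (fun σ (e : ↥H) => σ ⟨e.1, hH e.2⟩)) g {(⟨e0, he⟩ : ↥H)} τ) := by
  have hq1 : 1 ≤ q := by omega
  have hμ0 : ∀ σ : ↥G.edgeFinset → Fin q,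
      0 ≤ unif (fun σ' : ↥G.edgeFinset → Fin q => IsProperEC G σ') σ := by
    intro σ
    unfold unif
    apply div_nonneg
    · split <;> norm_num
    · positivity
  have hemb : Function.Injective (fun e : ↥H => (⟨e.1, hH e.2⟩ : ↥G.edgeFinset)) := by
    intro a b hab
    apply Subtype.ext
    have h2 : (⟨a.1, hH a.2⟩ : ↥G.edgeFinset) = ⟨b.1, hH b.2⟩ := hab
    simpa using h2
  have main := abstract_main (unif fun σ : ↥G.edgeFinset → Fin q => IsProperEC G σ) hμ0
    (by omega) hemb g ⟨e0, he⟩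
  refine le_trans main ?_
  have hν0 : ∀ τ, 0 ≤ pushf (unif fun σ : ↥G.edgeFinset → Fin q => IsProperEC G σ)
      (fun σ (e : ↥H) => σ ⟨e.1, hH e.2⟩) τ :=
    pushf_nonneg _ hμ0 _
  have hR0 : 0 ≤ expct (pushf (unif fun σ : ↥G.edgeFinset → Fin q => IsProperEC G σ)
      (fun σ (e : ↥H) => σ ⟨e.1, hH e.2⟩))
      (fun τ => cVar (pushf (unif fun σ : ↥G.edgeFinset → Fin q => IsProperEC G σ)
        (fun σ (e : ↥H) => σ ⟨e.1, hH e.2⟩)) g {(⟨e0, he⟩ : ↥H)} τ) := by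
    refine Finset.sum_nonneg fun τ _ => mul_nonneg (hν0 τ) ?_
    exact cVar_nonneg _ hν0 g _ τ
  exact le_mul_of_one_le_left hR0 (by exact_mod_cast hq1)
end

section
/- Let σ be a uniformly random proper q-edge-coloring of a complete (Δ−1)-ary tree of depth ℓ with an extra hanging root edge r colored a, where q = Δ + 2. Let S(σ) be the number of edges (excluding r) in the maximal (a,b)-alternating path starting from r. Then for any 0 ≤ s ≤ ℓ, Pr[S(σ) = s] ≤ (1 − 1/Δ)^s. -/
open scoped Classical

/-- The edges of the complete `d`-ary tree of depth `ℓ` with a hanging root edge: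
the edge at level `k` (with `0 ≤ k ≤ ℓ`) beneath the `j`-th vertex of level `k` is
encoded by `⟨k, j⟩`; level `0` is the hanging root edge `r`. The parent edge of `⟨k+1, j⟩`
is `⟨k, j / d⟩`. -/
abbrev TreeEdge (d ℓ : ℕ) := Σ k : Fin (ℓ + 1), Fin (d ^ (k : ℕ))

/-- The hanging root edge. -/
def rootEdge (d ℓ : ℕ) (hd : 0 < d) : TreeEdge d ℓ := ⟨0, ⟨0, pow_pos hd _⟩⟩

/-- Adjacency of edges in the tree: siblings (same level, same parent vertex) or
parent/child edges. -/
def EdgeAdj {d ℓ : ℕ} (e e' : TreeEdge d ℓ) : Prop :=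
  ((e.1 : ℕ) = (e'.1 : ℕ) ∧ e ≠ e' ∧ (e.2 : ℕ) / d = (e'.2 : ℕ) / d) ∨
  ((e'.1 : ℕ) = (e.1 : ℕ) + 1 ∧ (e'.2 : ℕ) / d = (e.2 : ℕ)) ∨
  ((e.1 : ℕ) = (e'.1 : ℕ) + 1 ∧ (e.2 : ℕ) / d = (e'.2 : ℕ))

/-- A proper edge coloring of the tree: adjacent edges receive distinct colors. -/
def ProperC {d ℓ q : ℕ} (σ : TreeEdge d ℓ → Fin q) : Prop :=
  ∀ e e', EdgeAdj e e' → σ e ≠ σ e'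

/-- The `m`-th ancestor (at level `s − m`) of the level-`s` edge indexed by `j`. -/
def anc (d : ℕ) (hd : 0 < d) {s : ℕ} (j : Fin (d ^ s)) (m : ℕ) (hm : m ≤ s) :
    Fin (d ^ (s - m)) :=
  ⟨(j : ℕ) / d ^ m, by
    have h1 : 0 < d ^ m := pow_pos hd m
    rw [Nat.div_lt_iff_lt_mul h1, ← pow_add, Nat.sub_add_cancel hm]
    exact j.isLt⟩

/-- The edge `⟨s, j⟩` is the endpoint of an `(a,b)`-alternating path of length `s`
starting from the root edge: the ancestor at level `s − m` is colored `a` if `s − m`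
is even and `b` if it is odd (so the root edge, at level `0`, is colored `a`). -/
def AltChain {d ℓ q : ℕ} (hd : 0 < d) (a b : Fin q) (σ : TreeEdge d ℓ → Fin q)
    (s : ℕ) (hs : s ≤ ℓ) (j : Fin (d ^ s)) : Prop :=
  ∀ m : ℕ, ∀ hm : m ≤ s,
    σ ⟨⟨s - m, by omega⟩, anc d hd j m hm⟩ = if (s - m) % 2 = 1 then b else a

/-- `S(σ) = s`: the maximal `(a,b)`-alternating path from the root edge has exactly `s`
edges besides the root edge. -/
def MaxAlt {d ℓ q : ℕ} (hd : 0 < d) (a b : Fin q) (σ : TreeEdge d ℓ → Fin q)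
    (s : ℕ) (hs : s ≤ ℓ) : Prop :=
  (∃ j : Fin (d ^ s), AltChain hd a b σ s hs j) ∧
  ∀ s' : ℕ, ∀ hs' : s' ≤ ℓ, ∀ j : Fin (d ^ s'), AltChain hd a b σ s' hs' j → s' ≤ s

section Aux

variable {d ℓ q : ℕ}

lemma adjSymm {e e' : TreeEdge d ℓ} (h : EdgeAdj e e') : EdgeAdj e' e := by
  rcases h with ⟨h1, h2, h3⟩ | ⟨h1, h2⟩ | ⟨h1, h2⟩
  · exact Or.inl ⟨h1.symm, Ne.symm h2, h3.symm⟩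
  · exact Or.inr (Or.inr ⟨h1, h2⟩)
  · exact Or.inr (Or.inl ⟨h1, h2⟩)

lemma edge_ext {e e' : TreeEdge d ℓ} (h1 : (e.1 : ℕ) = (e'.1 : ℕ))
    (h2 : (e.2 : ℕ) = (e'.2 : ℕ)) : e = e' := by
  rcases e with ⟨⟨k, hk⟩, v⟩
  rcases e' with ⟨⟨k', hk'⟩, v'⟩
  simp only [Fin.val_mk] at h1 h2
  subst h1
  obtain rfl : v = v' := Fin.ext h2
  rfl

lemma div_pow_succ (v n : ℕ) (hn : 1 ≤ n) : v / d ^ n = (v / d) / d ^ (n - 1) := by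
  rw [Nat.div_div_eq_div_mul]
  congr 1
  rw [← pow_succ']
  congr 1
  omega

/-- The edge at level `k` on the root-to-`j` path. -/
def pedge (d ℓ : ℕ) {s : ℕ} (hs : s ≤ ℓ) (j : Fin (d ^ s)) (hd0 : 0 < d)
    (k : ℕ) (hk : k ≤ s) : TreeEdge d ℓ :=
  ⟨⟨k, by omega⟩, ⟨(j : ℕ) / d ^ (s - k), by
    rw [Nat.div_lt_iff_lt_mul (pow_pos hd0 _), ← pow_add, Nat.add_sub_cancel' hk]
    exact j.isLt⟩⟩

end Aux
section Swap

variable {d ℓ q : ℕ}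

/-- Condition: edge `e` is a strict descendant of the path vertex at level `t`. -/
def inD {s : ℕ} (j : Fin (d ^ s)) (t : ℕ) (e : TreeEdge d ℓ) : Prop :=
  t < (e.1 : ℕ) ∧ (e.2 : ℕ) / d ^ ((e.1 : ℕ) - t) = (j : ℕ) / d ^ (s - t)

/-- Swap colors `x`, `y` on all edges strictly below the path vertex at level `t`. -/
noncomputable def swapMap {s : ℕ} (j : Fin (d ^ s)) (t : ℕ) (x y : Fin q)
    (σ : TreeEdge d ℓ → Fin q) : TreeEdge d ℓ → Fin q :=
  fun e => if inD j t e then Equiv.swap x y (σ e) else σ e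

lemma swapMap_invol {s : ℕ} (j : Fin (d ^ s)) (t : ℕ) (x y : Fin q)
    (σ : TreeEdge d ℓ → Fin q) : swapMap j t x y (swapMap j t x y σ) = σ := by
  funext e
  by_cases h : inD j t e <;> simp [swapMap, h, Equiv.swap_apply_self]

lemma swapMap_comm {s : ℕ} (j : Fin (d ^ s)) (t : ℕ) (x y : Fin q)
    (σ : TreeEdge d ℓ → Fin q) : swapMap j t x y σ = swapMap j t y x σ := by
  funext e
  by_cases h : inD j t e <;> simp [swapMap, h, Equiv.swap_comm]

lemma descent (hd0 : 0 < d) {s : ℕ} (hs : s ≤ ℓ) (j : Fin (d ^ s)) (t : ℕ)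
    (ht : t + 1 ≤ s) {e e' : TreeEdge d ℓ} (hadj : EdgeAdj e e') (he : inD j t e) :
    inD j t e' ∨ e' = pedge d ℓ hs j hd0 t (by omega) := by
  obtain ⟨hlt, hdiv⟩ := he
  rcases hadj with ⟨h1, h2, h3⟩ | ⟨h1, h2⟩ | ⟨h1, h2⟩
  · left
    refine ⟨by omega, ?_⟩
    have h1' : (e'.1 : ℕ) - t = (e.1 : ℕ) - t := by omega
    rw [h1', div_pow_succ _ _ (by omega), ← h3, ← div_pow_succ _ _ (by omega)]
    exact hdiv
  · left
    refine ⟨by omega, ?_⟩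
    rw [div_pow_succ _ _ (by omega), h2]
    have : (e'.1 : ℕ) - t - 1 = (e.1 : ℕ) - t := by omega
    rw [this]
    exact hdiv
  · by_cases hlt' : t < (e'.1 : ℕ)
    · left
      refine ⟨hlt', ?_⟩
      have h2' : (e'.1 : ℕ) - t = (e.1 : ℕ) - t - 1 := by omega
      rw [← h2, h2', ← div_pow_succ _ _ (by omega)]
      exact hdiv
    · right
      have hte : (e'.1 : ℕ) = t := by omega
      refine edge_ext hte ?_
      show (e'.2 : ℕ) = (j : ℕ) / d ^ (s - t)
      have h3 : (e.1 : ℕ) - t = 1 := by omega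
      rw [h3, pow_one] at hdiv
      rw [← h2]
      exact hdiv

lemma pedge_not_inD {s : ℕ} (hs : s ≤ ℓ) (j : Fin (d ^ s)) (hd0 : 0 < d)
    (t i : ℕ) (hi : i ≤ t) (hik : i ≤ s) : ¬ inD j t (pedge d ℓ hs j hd0 i hik) := by
  intro h
  exact absurd h.1 (by simp [pedge]; omega)

lemma pedge_inD {s : ℕ} (hs : s ≤ ℓ) (j : Fin (d ^ s)) (hd0 : 0 < d)
    (t : ℕ) (ht : t + 1 ≤ s) : inD j t (pedge d ℓ hs j hd0 (t + 1) ht) := by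
  refine ⟨by simp [pedge], ?_⟩
  show ((j : ℕ) / d ^ (s - (t + 1))) / d ^ (t + 1 - t) = (j : ℕ) / d ^ (s - t)
  have h1 : t + 1 - t = 1 := by omega
  rw [h1, pow_one, Nat.div_div_eq_div_mul, ← pow_succ]
  congr 2
  omega

lemma swap_mem (hd0 : 0 < d) {s : ℕ} (hs : s ≤ ℓ) (j : Fin (d ^ s))
    (c : ℕ → Fin q) (t : ℕ) (ht : t + 1 ≤ s) (x y : Fin q) (hx : x ≠ c t) (hy : y ≠ c t)
    (σ : TreeEdge d ℓ → Fin q) (h1 : ProperC σ)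
    (h2 : ∀ i : ℕ, ∀ hi : i ≤ t, σ (pedge d ℓ hs j hd0 i (by omega)) = c i)
    (h3 : σ (pedge d ℓ hs j hd0 (t + 1) ht) = x) :
    ProperC (swapMap j t x y σ) ∧
      (∀ i : ℕ, ∀ hi : i ≤ t, swapMap j t x y σ (pedge d ℓ hs j hd0 i (by omega)) = c i) ∧
      swapMap j t x y σ (pedge d ℓ hs j hd0 (t + 1) ht) = y := by
  have hfix : Equiv.swap x y (c t) = c t :=
    Equiv.swap_apply_of_ne_of_ne (Ne.symm hx) (Ne.symm hy)
  refine ⟨?_, ?_, ?_⟩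
  · intro e e' hadj
    by_cases he : inD j t e <;> by_cases he' : inD j t e'
    · simp only [swapMap, if_pos he, if_pos he']
      intro heq
      exact h1 e e' hadj ((Equiv.swap x y).injective heq)
    · simp only [swapMap, if_pos he, if_neg he']
      have hE : e' = pedge d ℓ hs j hd0 t (by omega) :=
        (descent hd0 hs j t ht hadj he).resolve_left he'
      have hce' : σ e' = c t := by rw [hE]; exact h2 t le_rfl
      rw [hce']
      intro heq
      have : σ e = c t := (Equiv.swap x y).injective (by rw [heq, hfix])
      exact h1 e e' hadj (by rw [this, hce'])
    · simp only [swapMap, if_neg he, if_pos he']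
      have hE : e = pedge d ℓ hs j hd0 t (by omega) :=
        (descent hd0 hs j t ht (adjSymm hadj) he').resolve_left he
      have hce : σ e = c t := by rw [hE]; exact h2 t le_rfl
      rw [hce]
      intro heq
      have : σ e' = c t := (Equiv.swap x y).injective (by rw [← heq, hfix])
      exact h1 e e' hadj (by rw [this, hce])
    · simp only [swapMap, if_neg he, if_neg he']
      exact h1 e e' hadj
  · intro i hi
    simp only [swapMap, if_neg (pedge_not_inD hs j hd0 t i hi (by omega))]
    exact h2 i hi
  · simp only [swapMap, if_pos (pedge_inD hs j hd0 t ht)]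
    rw [h3]
    exact Equiv.swap_apply_left x y

end Swap
section Count

variable {d ℓ q : ℕ}

/-- Colorings that are proper with prescribed colors `c i` on the path up to level `k`. -/
noncomputable def prefSet (d ℓ q : ℕ) {s : ℕ} (hs : s ≤ ℓ) (j : Fin (d ^ s)) (hd0 : 0 < d)
    (c : ℕ → Fin q) (k : ℕ) (hk : k ≤ s) : Finset (TreeEdge d ℓ → Fin q) :=
  Finset.univ.filter fun σ => ProperC σ ∧
    ∀ i : ℕ, ∀ hi : i ≤ k, σ (pedge d ℓ hs j hd0 i (hi.trans hk)) = c i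

noncomputable def fiberSet (d ℓ q : ℕ) {s : ℕ} (hs : s ≤ ℓ) (j : Fin (d ^ s)) (hd0 : 0 < d)
    (c : ℕ → Fin q) (t : ℕ) (ht : t + 1 ≤ s) (x : Fin q) : Finset (TreeEdge d ℓ → Fin q) :=
  Finset.univ.filter fun σ => ProperC σ ∧
    (∀ i : ℕ, ∀ hi : i ≤ t, σ (pedge d ℓ hs j hd0 i (by omega)) = c i) ∧
    σ (pedge d ℓ hs j hd0 (t + 1) ht) = x

lemma fiber_card_eq (hd0 : 0 < d) {s : ℕ} (hs : s ≤ ℓ) (j : Fin (d ^ s))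
    (c : ℕ → Fin q) (t : ℕ) (ht : t + 1 ≤ s) (x y : Fin q) (hx : x ≠ c t) (hy : y ≠ c t) :
    (fiberSet d ℓ q hs j hd0 c t ht x).card = (fiberSet d ℓ q hs j hd0 c t ht y).card := by
  apply Finset.card_bij' (fun σ _ => swapMap j t x y σ) (fun σ _ => swapMap j t x y σ)
  · intro σ hσ
    simp only [fiberSet, Finset.mem_filter, Finset.mem_univ, true_and] at hσ ⊢
    exact swap_mem hd0 hs j c t ht x y hx hy σ hσ.1 hσ.2.1 hσ.2.2
  · intro σ hσ
    simp only [fiberSet, Finset.mem_filter, Finset.mem_univ, true_and] at hσ ⊢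
    rw [swapMap_comm]
    exact swap_mem hd0 hs j c t ht y x hy hx σ hσ.1 hσ.2.1 hσ.2.2
  · intro σ _
    exact swapMap_invol j t x y σ
  · intro σ _
    exact swapMap_invol j t x y σ

lemma fiber_empty (hd0 : 0 < d) {s : ℕ} (hs : s ≤ ℓ) (j : Fin (d ^ s))
    (c : ℕ → Fin q) (t : ℕ) (ht : t + 1 ≤ s) :
    fiberSet d ℓ q hs j hd0 c t ht (c t) = ∅ := by
  ext σ
  simp only [fiberSet, Finset.mem_filter, Finset.mem_univ, true_and, Finset.notMem_empty,
    iff_false, not_and]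
  intro hp hpre hx
  have hadj : EdgeAdj (pedge d ℓ hs j hd0 t (by omega)) (pedge d ℓ hs j hd0 (t + 1) ht) := by
    refine Or.inr (Or.inl ⟨rfl, ?_⟩)
    show ((j : ℕ) / d ^ (s - (t + 1))) / d = (j : ℕ) / d ^ (s - t)
    rw [Nat.div_div_eq_div_mul, ← pow_succ]
    congr 2
    omega
  exact hp _ _ hadj (by rw [hx, hpre t le_rfl])

lemma step_count (hd0 : 0 < d) {s : ℕ} (hs : s ≤ ℓ) (j : Fin (d ^ s))
    (c : ℕ → Fin q) (t : ℕ) (ht : t + 1 ≤ s) (hc : c (t + 1) ≠ c t) :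
    (prefSet d ℓ q hs j hd0 c t (by omega)).card
      = (q - 1) * (prefSet d ℓ q hs j hd0 c (t + 1) ht).card := by
  have hsplit : (prefSet d ℓ q hs j hd0 c t (by omega)).card
      = ∑ x : Fin q, (fiberSet d ℓ q hs j hd0 c t ht x).card := by
    rw [Finset.card_eq_sum_card_fiberwise
      (f := fun σ => σ (pedge d ℓ hs j hd0 (t + 1) ht)) (t := Finset.univ)
      (fun _ _ => Finset.mem_univ _)]
    apply Finset.sum_congr rfl
    intro x _
    congr 1
    ext σ
    simp only [prefSet, fiberSet, Finset.filter_filter, Finset.mem_filter, Finset.mem_univ,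
      true_and]
    tauto
  have hpre : prefSet d ℓ q hs j hd0 c (t + 1) ht = fiberSet d ℓ q hs j hd0 c t ht (c (t + 1)) := by
    ext σ
    simp only [prefSet, fiberSet, Finset.mem_filter, Finset.mem_univ, true_and]
    constructor
    · rintro ⟨hp, h⟩
      exact ⟨hp, fun i hi => h i (by omega), h (t + 1) le_rfl⟩
    · rintro ⟨hp, h, hl⟩
      refine ⟨hp, fun i hi => ?_⟩
      rcases Nat.lt_or_ge i (t + 1) with h' | h'
      · exact h i (by omega)
      · have : i = t + 1 := by omega
        subst this
        exact hl
  rw [hsplit, hpre]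
  rw [← Finset.add_sum_erase _ _ (Finset.mem_univ (c t)), fiber_empty hd0 hs j c t ht]
  simp only [Finset.card_empty, zero_add]
  rw [Finset.sum_congr rfl (fun x hx =>
    fiber_card_eq hd0 hs j c t ht x (c (t + 1)) (Finset.ne_of_mem_erase hx) hc)]
  rw [Finset.sum_const, Finset.card_erase_of_mem (Finset.mem_univ _), Finset.card_univ,
    Fintype.card_fin, smul_eq_mul]

lemma prefix_pow (hd0 : 0 < d) {s : ℕ} (hs : s ≤ ℓ) (j : Fin (d ^ s))
    (c : ℕ → Fin q) (hc : ∀ i : ℕ, i + 1 ≤ s → c (i + 1) ≠ c i) :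
    ∀ k : ℕ, ∀ hk : k ≤ s,
      (prefSet d ℓ q hs j hd0 c 0 (Nat.zero_le s)).card
        = (q - 1) ^ k * (prefSet d ℓ q hs j hd0 c k hk).card
  | 0, _ => by simp [prefSet]
  | (k + 1), hk => by
    rw [prefix_pow hd0 hs j c hc k (by omega), step_count hd0 hs j c k hk (hc k hk),
      pow_succ]
    ring

end Count
section Link

variable {d ℓ q : ℕ}

lemma altChain_iff (hd0 : 0 < d) (a b : Fin q) (σ : TreeEdge d ℓ → Fin q)
    {s : ℕ} (hs : s ≤ ℓ) (j : Fin (d ^ s)) :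
    AltChain hd0 a b σ s hs j ↔
      ∀ k : ℕ, ∀ hk : k ≤ s,
        σ (pedge d ℓ hs j hd0 k hk) = (if k % 2 = 1 then b else a) := by
  constructor
  · intro h k hk
    have h2 := h (s - k) (by omega)
    have he : (⟨⟨s - (s - k), by omega⟩, anc d hd0 j (s - k) (by omega)⟩ : TreeEdge d ℓ)
        = pedge d ℓ hs j hd0 k hk := by
      refine edge_ext (by show s - (s - k) = k; omega) ?_
      show (j : ℕ) / d ^ (s - k) = (j : ℕ) / d ^ (s - k)
      rfl
    rw [he] at h2
    have h4 : s - (s - k) = k := by omega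
    rw [h4] at h2
    exact h2
  · intro h m hm
    have h2 := h (s - m) (by omega)
    have he : (⟨⟨s - m, by omega⟩, anc d hd0 j m hm⟩ : TreeEdge d ℓ)
        = pedge d ℓ hs j hd0 (s - m) (by omega) := by
      refine edge_ext rfl ?_
      show (j : ℕ) / d ^ m = (j : ℕ) / d ^ (s - (s - m))
      have h5 : s - (s - m) = m := by omega
      rw [h5]
    rw [he]
    exact h2

lemma alt_eq (hd0 : 0 < d) {s : ℕ} (hs : s ≤ ℓ) (j : Fin (d ^ s)) (a b : Fin q) :
    (Finset.univ.filter fun σ : TreeEdge d ℓ → Fin q =>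
        ProperC σ ∧ AltChain hd0 a b σ s hs j)
      = prefSet d ℓ q hs j hd0 (fun k => if k % 2 = 1 then b else a) s le_rfl := by
  ext σ
  simp only [prefSet, Finset.mem_filter, Finset.mem_univ, true_and]
  constructor
  · rintro ⟨hp, h⟩
    exact ⟨hp, fun i hi => (altChain_iff hd0 a b σ hs j).mp h i hi⟩
  · rintro ⟨hp, h⟩
    exact ⟨hp, (altChain_iff hd0 a b σ hs j).mpr (fun i hi => h i hi)⟩

lemma root_eq (hd0 : 0 < d) {s : ℕ} (hs : s ≤ ℓ) (j : Fin (d ^ s)) (a b : Fin q) :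
    prefSet d ℓ q hs j hd0 (fun k => if k % 2 = 1 then b else a) 0 (Nat.zero_le s)
      = Finset.univ.filter fun σ : TreeEdge d ℓ → Fin q =>
          ProperC σ ∧ σ (rootEdge d ℓ hd0) = a := by
  have hre : pedge d ℓ hs j hd0 0 (Nat.zero_le s) = rootEdge d ℓ hd0 := by
    refine edge_ext rfl ?_
    show (j : ℕ) / d ^ (s - 0) = 0
    rw [Nat.sub_zero]
    exact Nat.div_eq_of_lt j.isLt
  ext σ
  simp only [prefSet, Finset.mem_filter, Finset.mem_univ, true_and]
  constructor
  · rintro ⟨hp, h⟩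
    refine ⟨hp, ?_⟩
    have h0 := h 0 le_rfl
    rw [hre] at h0
    simpa using h0
  · rintro ⟨hp, h⟩
    refine ⟨hp, fun i hi => ?_⟩
    obtain rfl := Nat.le_zero.mp hi
    rw [hre]
    simpa using h

end Link
/-- For a uniformly random proper `q`-edge-coloring (`q = Δ + 2`) of the complete
`(Δ−1)`-ary tree of depth `ℓ` with a hanging root edge colored `a`, the probability that
the maximal `(a,b)`-alternating path from the root has exactly `s` edges besides the
root edge is at most `(1 − 1/Δ)^s`. -/
theorem statement16 (Δ ℓ q d s : ℕ) (hΔ : 2 ≤ Δ) (hd : d = Δ - 1) (hd0 : 0 < d)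
    (hq : q = Δ + 2) (a b : Fin q) (hab : a ≠ b) (hs : s ≤ ℓ) :
    ((Finset.univ.filter fun σ : TreeEdge d ℓ → Fin q =>
        ProperC σ ∧ σ (rootEdge d ℓ hd0) = a ∧ MaxAlt hd0 a b σ s hs).card : ℝ) /
      ((Finset.univ.filter fun σ : TreeEdge d ℓ → Fin q =>
        ProperC σ ∧ σ (rootEdge d ℓ hd0) = a).card : ℝ)
      ≤ (1 - 1 / (Δ : ℝ)) ^ s := by
  classical
  have hvalid : ∀ i : ℕ, i + 1 ≤ s →
      (fun k => if k % 2 = 1 then b else a) (i + 1) ≠ (fun k => if k % 2 = 1 then b else a) i := by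
    intro i _
    rcases Nat.mod_two_eq_zero_or_one i with h | h
    · have h1 : (i + 1) % 2 = 1 := by omega
      simp only [h, h1]
      simpa using hab.symm
    · have h1 : (i + 1) % 2 = 0 := by omega
      simp only [h, h1]
      simpa using hab
  set A := Finset.univ.filter fun σ : TreeEdge d ℓ → Fin q =>
      ProperC σ ∧ σ (rootEdge d ℓ hd0) = a with hA
  set Tset := Finset.univ.filter fun σ : TreeEdge d ℓ → Fin q =>
      ProperC σ ∧ σ (rootEdge d ℓ hd0) = a ∧ MaxAlt hd0 a b σ s hs with hT
  have hsub : Tset ⊆ Finset.univ.biUnion (fun j : Fin (d ^ s) =>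
      Finset.univ.filter fun σ : TreeEdge d ℓ → Fin q =>
        ProperC σ ∧ AltChain hd0 a b σ s hs j) := by
    intro σ hσ
    rw [hT, Finset.mem_filter] at hσ
    obtain ⟨-, hp, -, ⟨j, hch⟩, -⟩ := hσ
    rw [Finset.mem_biUnion]
    exact ⟨j, Finset.mem_univ j, Finset.mem_filter.mpr ⟨Finset.mem_univ σ, hp, hch⟩⟩
  have hcount : ∀ j : Fin (d ^ s),
      (q - 1) ^ s * (Finset.univ.filter fun σ : TreeEdge d ℓ → Fin q =>
        ProperC σ ∧ AltChain hd0 a b σ s hs j).card = A.card := by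
    intro j
    rw [alt_eq hd0 hs j a b, ← prefix_pow hd0 hs j _ hvalid s le_rfl, root_eq hd0 hs j a b, hA]
  have key : (q - 1) ^ s * Tset.card ≤ d ^ s * A.card := by
    calc (q - 1) ^ s * Tset.card
        ≤ (q - 1) ^ s * ∑ j : Fin (d ^ s),
            (Finset.univ.filter fun σ : TreeEdge d ℓ → Fin q =>
              ProperC σ ∧ AltChain hd0 a b σ s hs j).card := by
          gcongr
          exact (Finset.card_le_card hsub).trans Finset.card_biUnion_le
      _ = ∑ j : Fin (d ^ s), (q - 1) ^ s *
            (Finset.univ.filter fun σ : TreeEdge d ℓ → Fin q =>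
              ProperC σ ∧ AltChain hd0 a b σ s hs j).card := Finset.mul_sum _ _ _
      _ = ∑ _j : Fin (d ^ s), A.card := Finset.sum_congr rfl (fun j _ => hcount j)
      _ = d ^ s * A.card := by
          rw [Finset.sum_const, Finset.card_univ, Fintype.card_fin, smul_eq_mul]
  have hΔ2 : (2 : ℝ) ≤ (Δ : ℝ) := by exact_mod_cast hΔ
  rcases Nat.eq_zero_or_pos A.card with hA0 | hA0
  · have hq0 : 0 < (q - 1) ^ s := pow_pos (by omega) s
    have hT0 : Tset.card = 0 := by
      rw [hA0, mul_zero] at key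
      rcases Nat.mul_eq_zero.mp (Nat.le_zero.mp key) with h | h
      · omega
      · exact h
    rw [hT0, hA0]
    simp only [Nat.cast_zero, zero_div]
    apply pow_nonneg
    have h1 : 1 / (Δ : ℝ) ≤ 1 / 2 := by
      apply one_div_le_one_div_of_le <;> linarith
    linarith
  · have hq2 : (0 : ℝ) < ((q - 1 : ℕ) : ℝ) := by
      have : 0 < q - 1 := by omega
      exact_mod_cast this
    have hAR : (0 : ℝ) < (A.card : ℝ) := by exact_mod_cast hA0
    have h1 : ((q - 1 : ℕ) : ℝ) ^ s * (Tset.card : ℝ) ≤ (d : ℝ) ^ s * (A.card : ℝ) := by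
      exact_mod_cast key
    have h2 : (Tset.card : ℝ) / (A.card : ℝ) ≤ ((d : ℝ) / ((q - 1 : ℕ) : ℝ)) ^ s := by
      rw [div_pow, div_le_div_iff₀ hAR (pow_pos hq2 s)]
      calc (Tset.card : ℝ) * ((q - 1 : ℕ) : ℝ) ^ s
          = ((q - 1 : ℕ) : ℝ) ^ s * (Tset.card : ℝ) := by ring
        _ ≤ (d : ℝ) ^ s * (A.card : ℝ) := h1
    refine le_trans h2 (pow_le_pow_left₀ (by positivity) ?_ s)
    have hdR : (d : ℝ) = (Δ : ℝ) - 1 := by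
      rw [hd, Nat.cast_sub (by omega : 1 ≤ Δ)]
      simp
    have hqR : ((q - 1 : ℕ) : ℝ) = (Δ : ℝ) + 1 := by
      have h3 : q - 1 = Δ + 1 := by omega
      rw [h3]
      push_cast
      ring
    rw [hdR, hqR]
    have h3 : (1 : ℝ) - 1 / (Δ : ℝ) = ((Δ : ℝ) - 1) / (Δ : ℝ) := by
      field_simp
    rw [h3, div_le_div_iff₀ (by linarith) (by linarith)]
    nlinarith
end
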